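/- arXiv:1307.0067 — 8 statements merged into one kernel-verified Lean document; each statement's English description precedes it below -/
import Mathlib

section
/- Let M ≥ 2, let P₁,…,P_M be probability mass functions on a finite set 𝒴, and let ρ ∈ [0,1]^M with Σᵢ ρᵢ = 1 and ρᵢ < 1 for all i. Then EJS(ρ; P₁,…,P_M) ≥ JS(ρ; P₁,…,P_M) (as extended reals). -/
open Finset

/-- Kullback–Leibler divergence (base 2) between two pmfs on a finite set,
with the conventions `0·log₂(a/0) = 0` and `b·log₂(b/0) = +∞` for `b > 0`;
values in `[0,∞]` (formalized in the extended reals). -/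
noncomputable def KL {Y : Type*} [Fintype Y] (P Q : Y → ℝ) : EReal :=
  ∑ y, if P y = 0 then (0 : EReal)
       else if Q y = 0 then (⊤ : EReal)
       else ((P y * Real.logb 2 (P y / Q y) : ℝ) : EReal)

lemma ereal_sum_ne_bot {ι : Type*} (s : Finset ι) (f : ι → EReal)
    (h : ∀ x ∈ s, f x ≠ ⊥) : ∑ x ∈ s, f x ≠ ⊥ := by
  induction s using Finset.cons_induction with
  | empty => simp
  | cons a s ha ih =>
    rw [Finset.sum_cons]
    simp only [ne_eq, EReal.add_eq_bot_iff, not_or]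
    exact ⟨h a (Finset.mem_cons_self a s), ih fun x hx => h x (Finset.mem_cons_of_mem hx)⟩

lemma ereal_coe_sum {ι : Type*} (s : Finset ι) (f : ι → ℝ) :
    ((∑ x ∈ s, f x : ℝ) : EReal) = ∑ x ∈ s, ((f x : ℝ) : EReal) := by
  induction s using Finset.cons_induction with
  | empty => simp
  | cons a s ha ih => rw [Finset.sum_cons, Finset.sum_cons, EReal.coe_add, ih]

lemma KL_eq_top {Y : Type*} [Fintype Y] (P Q : Y → ℝ) (y0 : Y)
    (h1 : P y0 ≠ 0) (h2 : Q y0 = 0) : KL P Q = ⊤ := by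
  classical
  rw [KL, ← Finset.add_sum_erase _ _ (Finset.mem_univ y0), if_neg h1, if_pos h2]
  apply EReal.top_add_of_ne_bot
  apply ereal_sum_ne_bot
  intro x _
  split_ifs <;> simp [← EReal.coe_mul]

lemma KL_eq_coe {Y : Type*} [Fintype Y] (P Q : Y → ℝ) (h : ∀ y, P y ≠ 0 → Q y ≠ 0) :
    KL P Q = ((∑ y ∈ Finset.univ.filter (fun y => P y ≠ 0),
        P y * Real.logb 2 (P y / Q y) : ℝ) : EReal) := by
  rw [KL]
  have : ∑ y ∈ Finset.univ.filter (fun y => P y ≠ 0), P y * Real.logb 2 (P y / Q y)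
      = ∑ y : Y, if P y = 0 then (0:ℝ) else P y * Real.logb 2 (P y / Q y) := by
    rw [Finset.sum_filter]
    refine Finset.sum_congr rfl fun y _ => ?_
    by_cases hy : P y = 0 <;> simp [hy]
  rw [this, ereal_coe_sum]
  refine Finset.sum_congr rfl fun y _ => ?_
  by_cases hy : P y = 0
  · simp [hy]
  · simp [hy, h y hy]

lemma KL_mix_le {Y : Type*} [Fintype Y] (P Qt Q : Y → ℝ) (α : ℝ)
    (hα0 : 0 ≤ α) (hα1 : α < 1)
    (hP0 : ∀ y, 0 ≤ P y) (hP1 : ∑ y, P y = 1)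
    (hQt0 : ∀ y, 0 ≤ Qt y) (hQt1 : ∑ y, Qt y ≤ 1)
    (hQ : ∀ y, Q y = α * P y + (1 - α) * Qt y) :
    KL P Q ≤ KL P Qt := by
  by_cases htop : ∃ y, P y ≠ 0 ∧ Qt y = 0
  · obtain ⟨y0, h1, h2⟩ := htop
    rw [KL_eq_top P Qt y0 h1 h2]; exact le_top
  push_neg at htop
  have h1α : (0:ℝ) < 1 - α := by linarith
  have hQtpos : ∀ y, P y ≠ 0 → 0 < Qt y :=
    fun y hy => (hQt0 y).lt_of_ne' (htop y hy)
  have hQ0 : ∀ y, 0 ≤ Q y := by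
    intro y; rw [hQ y]
    have := hP0 y; have := hQt0 y
    nlinarith
  have hQpos : ∀ y, P y ≠ 0 → 0 < Q y := by
    intro y hy; rw [hQ y]
    have := hQtpos y hy
    have := hP0 y
    nlinarith
  rw [KL_eq_coe P Q (fun y hy => (hQpos y hy).ne'),
      KL_eq_coe P Qt (fun y hy => (hQtpos y hy).ne'), EReal.coe_le_coe_iff]
  set S := Finset.univ.filter (fun y => P y ≠ 0) with hSdef
  have hmemS : ∀ y ∈ S, P y ≠ 0 := by intro y hy; simpa [hSdef] using hy
  have hPpos : ∀ y ∈ S, 0 < P y := fun y hy => (hP0 y).lt_of_ne' (hmemS y hy)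
  have hSP : ∑ y ∈ S, P y = 1 := by
    rw [hSdef, Finset.sum_filter_ne_zero, hP1]
  -- sum of Q over S is ≤ 1 and positive
  have hSQ1 : ∑ y ∈ S, Q y ≤ 1 := by
    have h1 : ∑ y ∈ S, Q y ≤ ∑ y : Y, Q y :=
      Finset.sum_le_sum_of_subset_of_nonneg (Finset.subset_univ S)
        (fun y _ _ => hQ0 y)
    have h2 : ∑ y : Y, Q y = α * 1 + (1 - α) * ∑ y, Qt y := by
      simp_rw [hQ, Finset.sum_add_distrib, ← Finset.mul_sum, hP1]
    have h3 : ∑ y : Y, Q y ≤ 1 := by rw [h2]; nlinarith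
    linarith
  have hSne : S.Nonempty := by
    by_contra h
    rw [Finset.not_nonempty_iff_eq_empty] at h
    rw [h, Finset.sum_empty] at hSP
    norm_num at hSP
  have hSQpos : 0 < ∑ y ∈ S, Q y := by
    obtain ⟨y0, hy0⟩ := hSne
    exact Finset.sum_pos' (fun y hy => hQ0 y) ⟨y0, hy0, hQpos y0 (hmemS y0 hy0)⟩
  -- Cauchy-Schwarz: 1 ≤ ∑ P^2/Q
  have hT : 1 ≤ ∑ y ∈ S, (P y)^2 / Q y := by
    have hcs := sq_sum_div_le_sum_sq_div S P (fun y hy => hQpos y (hmemS y hy))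
    rw [hSP] at hcs
    have : (1:ℝ) ≤ 1^2 / ∑ y ∈ S, Q y := by
      rw [one_pow, le_div_iff₀ hSQpos, one_mul]; exact hSQ1
    linarith
  -- mixture bound: ∑ P Qt / Q ≤ 1
  have hmix : ∑ y ∈ S, P y * Qt y / Q y ≤ 1 := by
    have hterm : ∀ y ∈ S, (1 - α) * (P y * Qt y / Q y) = P y - α * (P y)^2 / Q y := by
      intro y hy
      have hQy := (hQpos y (hmemS y hy)).ne'
      have e : (1 - α) * Qt y = Q y - α * P y := by rw [hQ y]; ring
      field_simp
      linear_combination P y * e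
    have hsum : (1 - α) * ∑ y ∈ S, P y * Qt y / Q y
        = 1 - α * ∑ y ∈ S, (P y)^2 / Q y := by
      rw [Finset.mul_sum, Finset.sum_congr rfl hterm, Finset.sum_sub_distrib, hSP]
      congr 1
      rw [Finset.mul_sum]
      exact Finset.sum_congr rfl fun y _ => mul_div_assoc _ _ _
    nlinarith [hsum, hT]
  -- termwise log bound
  have hlog2 : (0:ℝ) < Real.log 2 := Real.log_pos (by norm_num)
  have key2 : ∀ y ∈ S, P y * Real.logb 2 (P y / Q y)
      ≤ P y * Real.logb 2 (P y / Qt y) - P y * (1 - Qt y / Q y) / Real.log 2 := by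
    intro y hy
    have hPy := hPpos y hy
    have hQy := hQpos y (hmemS y hy)
    have hQty := hQtpos y (hmemS y hy)
    have hdiff : Real.logb 2 (P y / Qt y) - Real.logb 2 (P y / Q y)
        = - Real.logb 2 (Qt y / Q y) := by
      rw [Real.logb_div hPy.ne' hQty.ne', Real.logb_div hPy.ne' hQy.ne',
        Real.logb_div hQty.ne' hQy.ne']
      ring
    have hb : Real.logb 2 (Qt y / Q y) ≤ (Qt y / Q y - 1) / Real.log 2 := by
      rw [Real.logb, div_le_div_iff₀ hlog2 hlog2]
      nlinarith [Real.log_le_sub_one_of_pos (div_pos hQty hQy)]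
    have hmul : P y * Real.logb 2 (Qt y / Q y) ≤ P y * ((Qt y / Q y - 1) / Real.log 2) :=
      mul_le_mul_of_nonneg_left hb hPy.le
    have hd2 : P y * Real.logb 2 (P y / Qt y) - P y * Real.logb 2 (P y / Q y)
        = - (P y * Real.logb 2 (Qt y / Q y)) := by
      rw [← mul_sub, hdiff]; ring
    have hr : P y * (1 - Qt y / Q y) / Real.log 2
        = -(P y * ((Qt y / Q y - 1) / Real.log 2)) := by ring
    linarith [hmul, hd2, hr]
  have hsumle := Finset.sum_le_sum key2
  rw [Finset.sum_sub_distrib] at hsumle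
  have hrhs : ∑ y ∈ S, P y * (1 - Qt y / Q y) / Real.log 2
      = (∑ y ∈ S, (P y - P y * Qt y / Q y)) / Real.log 2 := by
    rw [Finset.sum_div]
    exact Finset.sum_congr rfl fun y _ => by ring
  rw [Finset.sum_sub_distrib, hSP] at hrhs
  have hnn : 0 ≤ (1 - ∑ y ∈ S, P y * Qt y / Q y) / Real.log 2 :=
    div_nonneg (by linarith) hlog2.le
  linarith [hsumle, hrhs, hnn]

/-- Extrinsic Jensen–Shannon divergence (for weight vectors with `ρ i < 1` for all `i`):
`EJS(ρ; P₁,…,P_M) = Σᵢ ρᵢ · D(Pᵢ ‖ Σ_{j≠i} (ρⱼ/(1−ρᵢ)) Pⱼ)`. -/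
noncomputable def EJS {Y : Type*} [Fintype Y] {M : ℕ} (ρ : Fin M → ℝ)
    (P : Fin M → Y → ℝ) : EReal :=
  ∑ i, ((ρ i : ℝ) : EReal) *
    KL (P i) (fun y => ∑ j ∈ univ.erase i, (ρ j / (1 - ρ i)) * P j y)

/-- Jensen–Shannon divergence: `JS(ρ; P₁,…,P_M) = Σᵢ ρᵢ · D(Pᵢ ‖ Σⱼ ρⱼ Pⱼ)`. -/
noncomputable def JS {Y : Type*} [Fintype Y] {M : ℕ} (ρ : Fin M → ℝ)
    (P : Fin M → Y → ℝ) : EReal :=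
  ∑ i, ((ρ i : ℝ) : EReal) * KL (P i) (fun y => ∑ j, ρ j * P j y)

/-- The EJS divergence is lower bounded by the JS divergence (as extended reals). -/
theorem ejs_ge_js {M : ℕ} (hM : 2 ≤ M) {Y : Type*} [Fintype Y]
    (P : Fin M → Y → ℝ)
    (hP0 : ∀ i y, 0 ≤ P i y) (hP1 : ∀ i, ∑ y, P i y = 1)
    (ρ : Fin M → ℝ) (hρ0 : ∀ i, 0 ≤ ρ i) (hρ1 : ∑ i, ρ i = 1)
    (hρlt : ∀ i, ρ i < 1) :
    JS ρ P ≤ EJS ρ P := by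
  rw [JS, EJS]
  refine Finset.sum_le_sum fun i _ => ?_
  refine mul_le_mul_of_nonneg_left ?_ (by exact_mod_cast hρ0 i)
  have h1α : (0:ℝ) < 1 - ρ i := by linarith [hρlt i]
  refine KL_mix_le _ _ _ (ρ i) (hρ0 i) (hρlt i) (hP0 i) (hP1 i) ?_ ?_ ?_
  · intro y
    exact Finset.sum_nonneg fun j _ =>
      mul_nonneg (div_nonneg (hρ0 j) h1α.le) (hP0 j y)
  · rw [Finset.sum_comm]
    have : ∀ j ∈ univ.erase i, ∑ y, (ρ j / (1 - ρ i)) * P j y = ρ j / (1 - ρ i) := by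
      intro j _
      rw [← Finset.mul_sum, hP1 j, mul_one]
    rw [Finset.sum_congr rfl this, ← Finset.sum_div,
      Finset.sum_erase_eq_sub (Finset.mem_univ i), hρ1, div_self h1α.ne']
  · intro y
    rw [Finset.mul_sum, ← Finset.add_sum_erase _ (fun j => ρ j * P j y) (Finset.mem_univ i)]
    congr 1
    refine Finset.sum_congr rfl fun j _ => ?_
    field_simp
end

section
/- Let M ≥ 2, let P₁,…,P_M be probability mass functions on a finite set 𝒴 with Pᵢ(y) > 0 for all i and y, and let ρ ∈ [0,1]^M with Σᵢ ρᵢ = 1 and ρᵢ < 1 for all i. Set P_ρ(y) := Σᵢ ρᵢ Pᵢ(y). Then EJS(ρ; P₁,…,P_M) = U(ρ) − Σ_{y∈𝒴} P_ρ(y) · U([ρ₁P₁(y)/P_ρ(y), …, ρ_M P_M(y)/P_ρ(y)]). -/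
open Finset

/-- The average log-likelihood function `U(σ) = Σᵢ σᵢ · log₂((1−σᵢ)/σᵢ)`,
with the convention `0·log₂(1/0) = 0` (automatic since `x/0 = 0` and `logb 2 0 = 0`). -/
noncomputable def Ufun {M : ℕ} (σ : Fin M → ℝ) : ℝ :=
  ∑ i, σ i * Real.logb 2 ((1 - σ i) / σ i)

lemma coe_sum_ereal {α : Type*} (s : Finset α) (f : α → ℝ) :
    ((∑ x ∈ s, f x : ℝ) : EReal) = ∑ x ∈ s, ((f x : ℝ) : EReal) := by
  induction s using Finset.cons_induction with
  | empty => simp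
  | cons a s ha ih => rw [Finset.sum_cons, Finset.sum_cons, EReal.coe_add, ih]

/-- `EJS(ρ; P₁,…,P_M) = U(ρ) − Σ_y P_ρ(y) · U(ρ₁P₁(y)/P_ρ(y), …, ρ_M P_M(y)/P_ρ(y))`,
where `P_ρ(y) = Σᵢ ρᵢ Pᵢ(y)`. -/
theorem ejs_eq_U_drop {M : ℕ} (hM : 2 ≤ M) {Y : Type*} [Fintype Y]
    (P : Fin M → Y → ℝ)
    (hPpos : ∀ i y, 0 < P i y) (hP1 : ∀ i, ∑ y, P i y = 1)
    (ρ : Fin M → ℝ) (hρ0 : ∀ i, 0 ≤ ρ i) (hρ1 : ∑ i, ρ i = 1)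
    (hρlt : ∀ i, ρ i < 1) :
    EJS ρ P =
      ((Ufun ρ -
        ∑ y, (∑ i, ρ i * P i y) *
          Ufun (fun i => ρ i * P i y / (∑ j, ρ j * P j y)) : ℝ) : EReal) := by
  have hρc : ∀ i : Fin M, (0:ℝ) < 1 - ρ i := fun i => by linarith [hρlt i]
  have hD : ∀ (i : Fin M) (y : Y), 0 < ∑ j ∈ univ.erase i, ρ j * P j y := by
    intro i y
    have hsum : ∑ j ∈ univ.erase i, ρ j = 1 - ρ i := by
      rw [Finset.sum_erase_eq_sub (mem_univ i), hρ1]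
    have hex : ∃ j ∈ univ.erase i, 0 < ρ j := by
      by_contra h
      push_neg at h
      have : ∑ j ∈ univ.erase i, ρ j = 0 :=
        Finset.sum_eq_zero fun j hj => le_antisymm (h j hj) (hρ0 j)
      rw [hsum] at this; linarith [hρlt i]
    obtain ⟨j, hj, hjpos⟩ := hex
    exact Finset.sum_pos' (fun k _ => mul_nonneg (hρ0 k) (hPpos k y).le)
      ⟨j, hj, mul_pos hjpos (hPpos j y)⟩
  have hPρ : ∀ y, 0 < ∑ j, ρ j * P j y := by
    intro y
    have h0 := hD ⟨0, by omega⟩ y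
    have hle : ∑ j ∈ univ.erase (⟨0, by omega⟩ : Fin M), ρ j * P j y ≤ ∑ j, ρ j * P j y :=
      Finset.sum_le_sum_of_subset_of_nonneg (Finset.erase_subset _ _)
        (fun k _ _ => mul_nonneg (hρ0 k) (hPpos k y).le)
    linarith
  have hQ : ∀ (i : Fin M) (y : Y),
      (∑ j ∈ univ.erase i, (ρ j / (1 - ρ i)) * P j y)
        = (∑ j ∈ univ.erase i, ρ j * P j y) / (1 - ρ i) := by
    intro i y
    rw [Finset.sum_div]
    exact Finset.sum_congr rfl fun j _ => by ring
  have hQpos : ∀ (i : Fin M) (y : Y),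
      0 < (∑ j ∈ univ.erase i, (ρ j / (1 - ρ i)) * P j y) := by
    intro i y
    rw [hQ]
    exact div_pos (hD i y) (hρc i)
  have hKL : ∀ i : Fin M,
      KL (P i) (fun y => ∑ j ∈ univ.erase i, (ρ j / (1 - ρ i)) * P j y)
        = ((∑ y, P i y * Real.logb 2 (P i y /
            ((∑ j ∈ univ.erase i, ρ j * P j y) / (1 - ρ i))) : ℝ) : EReal) := by
    intro i
    unfold KL
    rw [coe_sum_ereal]
    refine Finset.sum_congr rfl fun y _ => ?_
    simp only [if_neg (hPpos i y).ne', hQ i y,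
      if_neg (div_pos (hD i y) (hρc i)).ne']
  have hEJS : EJS ρ P = ((∑ i, ρ i * ∑ y, P i y * Real.logb 2 (P i y /
      ((∑ j ∈ univ.erase i, ρ j * P j y) / (1 - ρ i))) : ℝ) : EReal) := by
    unfold EJS
    rw [coe_sum_ereal]
    refine Finset.sum_congr rfl fun i _ => ?_
    rw [hKL i, ← EReal.coe_mul]
  rw [hEJS, EReal.coe_eq_coe_iff]
  unfold Ufun
  beta_reduce
  simp only [Finset.mul_sum]
  conv_rhs => rw [Finset.sum_comm]
  rw [← Finset.sum_sub_distrib]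
  refine Finset.sum_congr rfl fun i _ => ?_
  rcases eq_or_lt_of_le (hρ0 i) with hz | hpos
  · rw [← hz]
    simp
  · have h1 : ρ i * Real.logb 2 ((1 - ρ i) / ρ i)
        = ∑ y, ρ i * P i y * Real.logb 2 ((1 - ρ i) / ρ i) := by
      have : (∑ y, ρ i * P i y * Real.logb 2 ((1 - ρ i) / ρ i))
          = (∑ y, P i y) * (ρ i * Real.logb 2 ((1 - ρ i) / ρ i)) := by
        rw [Finset.sum_mul]
        exact Finset.sum_congr rfl fun y _ => by ring
      rw [this, hP1 i, one_mul]
    rw [h1, ← Finset.sum_sub_distrib]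
    refine Finset.sum_congr rfl fun y _ => ?_
    set D := ∑ j ∈ univ.erase i, ρ j * P j y with hDdef
    clear_value D
    have hDpos : 0 < D := hDdef ▸ hD i y
    have hPy := hPpos i y
    have hPρy := hPρ y
    have hsplit : (∑ j, ρ j * P j y) = ρ i * P i y + D := by
      rw [hDdef, Finset.sum_erase_eq_sub (mem_univ i)]; ring
    have hσc : 1 - ρ i * P i y / (∑ j, ρ j * P j y) = D / (∑ j, ρ j * P j y) := by
      rw [eq_div_iff hPρy.ne']
      field_simp
      linarith [hsplit]
    rw [hσc]
    have hratio : (D / ∑ j, ρ j * P j y) / (ρ i * P i y / ∑ j, ρ j * P j y)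
        = D / (ρ i * P i y) := by
      field_simp
    have habs : (∑ k, ρ k * P k y) *
        ((ρ i * P i y / ∑ j, ρ j * P j y) *
          Real.logb 2 ((D / ∑ j, ρ j * P j y) / (ρ i * P i y / ∑ j, ρ j * P j y)))
        = ρ i * P i y * Real.logb 2 (D / (ρ i * P i y)) := by
      rw [hratio]
      field_simp
    have hlog : Real.logb 2 (P i y / (D / (1 - ρ i)))
        = Real.logb 2 ((1 - ρ i) / ρ i) - Real.logb 2 (D / (ρ i * P i y)) := by
      rw [← Real.logb_div (div_pos (hρc i) hpos).ne'
        (div_pos hDpos (mul_pos hpos hPy)).ne']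
      congr 1
      have hDne : D ≠ 0 := hDdef ▸ hDpos.ne'
      field_simp [hpos.ne', hPy.ne', hDne, (hρc i).ne']
    rw [habs, hlog]
    ring
end

section
/- Let M ≥ 2, let P₁,…,P_M and Q₁,…,Q_M be two families of probability mass functions on a finite set 𝒴, let ρ ∈ [0,1]^M with Σᵢ ρᵢ = 1 and ρᵢ < 1 for all i, and let λ ∈ [0,1], λ̄ = 1−λ. Then EJS(ρ; λP₁+λ̄Q₁, …, λP_M+λ̄Q_M) ≤ λ·EJS(ρ; P₁,…,P_M) + λ̄·EJS(ρ; Q₁,…,Q_M) (as extended reals); i.e., the EJS divergence is convex in the distributions P₁,…,P_M. -/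
open Finset

noncomputable def Fkl (p q : ℝ) : EReal :=
  if p = 0 then (0 : EReal) else if q = 0 then (⊤ : EReal)
  else ((p * Real.logb 2 (p / q) : ℝ) : EReal)

lemma Fkl_ne_bot (p q : ℝ) : Fkl p q ≠ ⊥ := by
  unfold Fkl; split_ifs <;> simp [← EReal.coe_mul]

lemma coe_mul_Fkl_ne_bot (l p q : ℝ) (hl : 0 ≤ l) : (l : EReal) * Fkl p q ≠ ⊥ := by
  rcases eq_or_lt_of_le hl with h | h
  · rw [← h]; simp
  · unfold Fkl; split_ifs
    · simp
    · rw [EReal.coe_mul_top_of_pos h]; simp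
    · simp [← EReal.coe_mul]

lemma ereal_coe_mul_add (c : ℝ) (hc : 0 ≤ c) (x y : EReal) :
    (c : EReal) * (x + y) = (c : EReal) * x + (c : EReal) * y := by
  rcases eq_or_lt_of_le hc with h | h
  · rw [← h]; simp
  · induction x using EReal.rec <;> induction y using EReal.rec <;>
      simp_all [EReal.coe_mul_bot_of_pos h, EReal.coe_mul_top_of_pos h,
        ← EReal.coe_mul, ← EReal.coe_add]
    all_goals ring
    

lemma ereal_coe_mul_sum {ι : Type*} (c : ℝ) (hc : 0 ≤ c) (s : Finset ι) (f : ι → EReal) :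
    (c : EReal) * ∑ i ∈ s, f i = ∑ i ∈ s, (c : EReal) * f i := by
  induction s using Finset.cons_induction with
  | empty => simp
  | cons i s hi ih => rw [Finset.sum_cons, Finset.sum_cons, ereal_coe_mul_add c hc, ih]

lemma logsum (a b c d : ℝ) (ha : 0 ≤ a) (hb : 0 ≤ b) (hc : 0 ≤ c) (hd : 0 ≤ d)
    (hba : b = 0 → a = 0) (hdc : d = 0 → c = 0) (hbd : 0 < b + d) :
    (a + c) * Real.log ((a + c) / (b + d)) ≤ a * Real.log (a / b) + c * Real.log (c / d) := by
  rcases eq_or_lt_of_le hb with hb0 | hb0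
  · have ha0 : a = 0 := hba hb0.symm
    simp [ha0, ← hb0]
  rcases eq_or_lt_of_le hd with hd0 | hd0
  · have hc0 : c = 0 := hdc hd0.symm
    simp [hc0, ← hd0]
  have hbd' : (0:ℝ) < b + d := by linarith
  have key := Real.convexOn_mul_log.2 (Set.mem_Ici.2 (div_nonneg ha hb0.le))
    (Set.mem_Ici.2 (div_nonneg hc hd0.le))
    (div_nonneg hb0.le hbd'.le) (div_nonneg hd0.le hbd'.le)
    (by field_simp)
  simp only [smul_eq_mul] at key
  have hx : b / (b + d) * (a / b) + d / (b + d) * (c / d) = (a + c) / (b + d) := by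
    field_simp
  rw [hx] at key
  have h1 : (a + c) * Real.log ((a + c) / (b + d))
      = (b + d) * ((a + c) / (b + d) * Real.log ((a + c) / (b + d))) := by
    field_simp
  have h2 : a * Real.log (a / b) + c * Real.log (c / d)
      = (b + d) * (b / (b + d) * (a / b * Real.log (a / b))
          + d / (b + d) * (c / d * Real.log (c / d))) := by
    field_simp
  rw [h1, h2]
  exact mul_le_mul_of_nonneg_left key hbd'.le

lemma term_eq (l p q : ℝ) (h : l = 0 ∨ p = 0 ∨ q ≠ 0) :
    (l : EReal) * Fkl p q = ((l * (p * Real.logb 2 (p / q)) : ℝ) : EReal) := by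
  rcases h with h | h | h
  · simp [h]
  · simp [h, Fkl]
  · by_cases hp : p = 0
    · simp [hp, Fkl]
    · rw [Fkl, if_neg hp, if_neg h, ← EReal.coe_mul]

lemma bridge (l p q : ℝ) (h : l = 0 ∨ p = 0 ∨ q ≠ 0) :
    (l * p) * Real.log ((l * p) / (l * q)) = l * (p * Real.log (p / q)) := by
  by_cases hl : l = 0
  · simp [hl]
  by_cases hp : p = 0
  · simp [hp]
  have hq : q ≠ 0 := by tauto
  rw [mul_div_mul_left _ _ hl]
  ring

lemma Fkl_convex (p₁ p₂ q₁ q₂ l : ℝ) (hp₁ : 0 ≤ p₁) (hp₂ : 0 ≤ p₂)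
    (hq₁ : 0 ≤ q₁) (hq₂ : 0 ≤ q₂) (hl0 : 0 ≤ l) (hl1 : l ≤ 1) :
    Fkl (l * p₁ + (1 - l) * p₂) (l * q₁ + (1 - l) * q₂)
      ≤ (l : EReal) * Fkl p₁ q₁ + ((1 - l : ℝ) : EReal) * Fkl p₂ q₂ := by
  have hl0' : (0:ℝ) ≤ 1 - l := by linarith
  by_cases hp : l * p₁ + (1 - l) * p₂ = 0
  · rw [Fkl, if_pos hp]
    have h1 : l * p₁ = 0 ∧ (1 - l) * p₂ = 0 :=
      (add_eq_zero_iff_of_nonneg (mul_nonneg hl0 hp₁) (mul_nonneg hl0' hp₂)).1 hp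
    have e1 : (l : EReal) * Fkl p₁ q₁ = 0 := by
      rcases mul_eq_zero.1 h1.1 with h | h <;> simp [h, Fkl]
    have e2 : ((1 - l : ℝ) : EReal) * Fkl p₂ q₂ = 0 := by
      rcases mul_eq_zero.1 h1.2 with h | h <;> simp [h, Fkl]
    rw [e1, e2, add_zero]
  by_cases hq : l * q₁ + (1 - l) * q₂ = 0
  · -- RHS is ⊤
    have hq1 : l * q₁ = 0 ∧ (1 - l) * q₂ = 0 :=
      (add_eq_zero_iff_of_nonneg (mul_nonneg hl0 hq₁) (mul_nonneg hl0' hq₂)).1 hq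
    have hppos : 0 < l * p₁ ∨ 0 < (1 - l) * p₂ := by
      by_contra hcon
      push_neg at hcon
      have := mul_nonneg hl0 hp₁
      have := mul_nonneg hl0' hp₂
      exact hp (by linarith [hcon.1, hcon.2])
    have hRHS : (l : EReal) * Fkl p₁ q₁ + ((1 - l : ℝ) : EReal) * Fkl p₂ q₂ = ⊤ := by
      rcases hppos with hpos | hpos
      · have hlne : l ≠ 0 := fun h => by simp [h] at hpos
        have hlpos : 0 < l := lt_of_le_of_ne hl0 (Ne.symm hlne)
        have hp1ne : p₁ ≠ 0 := fun h => by simp [h] at hpos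
        have hq10 : q₁ = 0 := by
          rcases mul_eq_zero.1 hq1.1 with h | h
          · exact absurd h hlne
          · exact h
        have : (l : EReal) * Fkl p₁ q₁ = ⊤ := by
          rw [Fkl, if_neg hp1ne, if_pos hq10, EReal.coe_mul_top_of_pos hlpos]
        rw [this]
        exact EReal.top_add_of_ne_bot (coe_mul_Fkl_ne_bot _ _ _ hl0')
      · have hlne : (1 - l) ≠ 0 := fun h => by simp [h] at hpos
        have hlpos : 0 < 1 - l := lt_of_le_of_ne hl0' (Ne.symm hlne)
        have hp2ne : p₂ ≠ 0 := fun h => by simp [h] at hpos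
        have hq20 : q₂ = 0 := by
          rcases mul_eq_zero.1 hq1.2 with h | h
          · exact absurd h hlne
          · exact h
        have : ((1 - l : ℝ) : EReal) * Fkl p₂ q₂ = ⊤ := by
          rw [Fkl, if_neg hp2ne, if_pos hq20, EReal.coe_mul_top_of_pos hlpos]
        rw [this]
        exact EReal.add_top_of_ne_bot (coe_mul_Fkl_ne_bot _ _ _ hl0)
    rw [hRHS]
    exact le_top
  -- main case: p > 0, q > 0
  by_cases ht₁ : l ≠ 0 ∧ p₁ ≠ 0 ∧ q₁ = 0
  · have hlpos : 0 < l := lt_of_le_of_ne hl0 (Ne.symm ht₁.1)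
    have hRHS : (l : EReal) * Fkl p₁ q₁ + ((1 - l : ℝ) : EReal) * Fkl p₂ q₂ = ⊤ := by
      have : (l : EReal) * Fkl p₁ q₁ = ⊤ := by
        rw [Fkl, if_neg ht₁.2.1, if_pos ht₁.2.2, EReal.coe_mul_top_of_pos hlpos]
      rw [this]
      exact EReal.top_add_of_ne_bot (coe_mul_Fkl_ne_bot _ _ _ hl0')
    rw [hRHS]; exact le_top
  by_cases ht₂ : (1 - l) ≠ 0 ∧ p₂ ≠ 0 ∧ q₂ = 0
  · have hlpos : 0 < 1 - l := lt_of_le_of_ne hl0' (Ne.symm ht₂.1)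
    have hRHS : (l : EReal) * Fkl p₁ q₁ + ((1 - l : ℝ) : EReal) * Fkl p₂ q₂ = ⊤ := by
      have : ((1 - l : ℝ) : EReal) * Fkl p₂ q₂ = ⊤ := by
        rw [Fkl, if_neg ht₂.2.1, if_pos ht₂.2.2, EReal.coe_mul_top_of_pos hlpos]
      rw [this]
      exact EReal.add_top_of_ne_bot (coe_mul_Fkl_ne_bot _ _ _ hl0)
    rw [hRHS]; exact le_top
  -- all finite
  have h₁ : l = 0 ∨ p₁ = 0 ∨ q₁ ≠ 0 := by tauto
  have h₂ : (1 - l) = 0 ∨ p₂ = 0 ∨ q₂ ≠ 0 := by tauto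
  rw [term_eq _ _ _ h₁, term_eq _ _ _ h₂, Fkl, if_neg hp, if_neg hq, ← EReal.coe_add,
    EReal.coe_le_coe_iff]
  -- real inequality
  have hlog2 : (0:ℝ) < Real.log 2 := Real.log_pos (by norm_num)
  have hbapos : 0 < l * q₁ + (1 - l) * q₂ :=
    lt_of_le_of_ne (add_nonneg (mul_nonneg hl0 hq₁) (mul_nonneg hl0' hq₂)) (Ne.symm hq)
  have key := logsum (l * p₁) (l * q₁) ((1 - l) * p₂) ((1 - l) * q₂)
    (mul_nonneg hl0 hp₁) (mul_nonneg hl0 hq₁) (mul_nonneg hl0' hp₂) (mul_nonneg hl0' hq₂)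
    (fun h => by
      rcases mul_eq_zero.1 h with h' | h'
      · rw [h', zero_mul]
      · rcases h₁ with h'' | h'' | h'' <;> simp_all)
    (fun h => by
      rcases mul_eq_zero.1 h with h' | h'
      · rw [h', zero_mul]
      · rcases h₂ with h'' | h'' | h'' <;> simp_all)
    hbapos
  rw [bridge l p₁ q₁ h₁, bridge (1 - l) p₂ q₂ h₂] at key
  simp only [Real.logb]
  calc (l * p₁ + (1 - l) * p₂) *
        (Real.log ((l * p₁ + (1 - l) * p₂) / (l * q₁ + (1 - l) * q₂)) / Real.log 2)
      = ((l * p₁ + (1 - l) * p₂) *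
          Real.log ((l * p₁ + (1 - l) * p₂) / (l * q₁ + (1 - l) * q₂))) / Real.log 2 := by
        ring
    _ ≤ (l * (p₁ * Real.log (p₁ / q₁)) + (1 - l) * (p₂ * Real.log (p₂ / q₂))) / Real.log 2 := by
        gcongr
    _ = l * (p₁ * (Real.log (p₁ / q₁) / Real.log 2))
        + (1 - l) * (p₂ * (Real.log (p₂ / q₂) / Real.log 2)) := by ring

lemma KL_eq_sum_Fkl {Y : Type*} [Fintype Y] (P Q : Y → ℝ) :
    KL P Q = ∑ y, Fkl (P y) (Q y) := rfl

lemma KL_convex {Y : Type*} [Fintype Y] (P₁ P₂ Q₁ Q₂ : Y → ℝ)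
    (hP₁ : ∀ y, 0 ≤ P₁ y) (hP₂ : ∀ y, 0 ≤ P₂ y)
    (hQ₁ : ∀ y, 0 ≤ Q₁ y) (hQ₂ : ∀ y, 0 ≤ Q₂ y)
    (l : ℝ) (hl0 : 0 ≤ l) (hl1 : l ≤ 1) :
    KL (fun y => l * P₁ y + (1 - l) * P₂ y) (fun y => l * Q₁ y + (1 - l) * Q₂ y)
      ≤ (l : EReal) * KL P₁ Q₁ + ((1 - l : ℝ) : EReal) * KL P₂ Q₂ := by
  rw [KL_eq_sum_Fkl, KL_eq_sum_Fkl, KL_eq_sum_Fkl, ereal_coe_mul_sum l hl0,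
    ereal_coe_mul_sum (1 - l) (by linarith), ← Finset.sum_add_distrib]
  exact Finset.sum_le_sum fun y _ =>
    Fkl_convex (P₁ y) (P₂ y) (Q₁ y) (Q₂ y) l (hP₁ y) (hP₂ y) (hQ₁ y) (hQ₂ y) hl0 hl1


/-- The EJS divergence is convex in the distributions `P₁,…,P_M`:
`EJS(ρ; λP+λ̄Q) ≤ λ·EJS(ρ; P) + λ̄·EJS(ρ; Q)` (as extended reals). -/
theorem ejs_convex {M : ℕ} (hM : 2 ≤ M) {Y : Type*} [Fintype Y]
    (P Q : Fin M → Y → ℝ)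
    (hP0 : ∀ i y, 0 ≤ P i y) (hP1 : ∀ i, ∑ y, P i y = 1)
    (hQ0 : ∀ i y, 0 ≤ Q i y) (hQ1 : ∀ i, ∑ y, Q i y = 1)
    (ρ : Fin M → ℝ) (hρ0 : ∀ i, 0 ≤ ρ i) (hρ1 : ∑ i, ρ i = 1)
    (hρlt : ∀ i, ρ i < 1)
    (l : ℝ) (hl0 : 0 ≤ l) (hl1 : l ≤ 1) :
    EJS ρ (fun i y => l * P i y + (1 - l) * Q i y)
      ≤ ((l : ℝ) : EReal) * EJS ρ P + ((1 - l : ℝ) : EReal) * EJS ρ Q := by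
  have hl0' : (0:ℝ) ≤ 1 - l := by linarith
  have hc : ∀ i j : Fin M, 0 ≤ ρ j / (1 - ρ i) :=
    fun i j => div_nonneg (hρ0 j) (by linarith [hρlt i])
  unfold EJS
  rw [ereal_coe_mul_sum l hl0, ereal_coe_mul_sum (1 - l) hl0', ← Finset.sum_add_distrib]
  refine Finset.sum_le_sum fun i _ => ?_
  have hfun : (fun y => ∑ j ∈ univ.erase i,
        (ρ j / (1 - ρ i)) * ((fun i y => l * P i y + (1 - l) * Q i y) j y))
      = (fun y => l * (∑ j ∈ univ.erase i, (ρ j / (1 - ρ i)) * P j y)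
          + (1 - l) * (∑ j ∈ univ.erase i, (ρ j / (1 - ρ i)) * Q j y)) := by
    funext y
    rw [Finset.mul_sum, Finset.mul_sum, ← Finset.sum_add_distrib]
    exact Finset.sum_congr rfl fun j _ => by ring
  have hKL := KL_convex (P i) (Q i)
      (fun y => ∑ j ∈ univ.erase i, (ρ j / (1 - ρ i)) * P j y)
      (fun y => ∑ j ∈ univ.erase i, (ρ j / (1 - ρ i)) * Q j y)
      (hP0 i) (hQ0 i)
      (fun y => Finset.sum_nonneg fun j _ => mul_nonneg (hc i j) (hP0 j y))
      (fun y => Finset.sum_nonneg fun j _ => mul_nonneg (hc i j) (hQ0 j y))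
      l hl0 hl1
  calc ((ρ i : ℝ) : EReal) * KL ((fun i y => l * P i y + (1 - l) * Q i y) i)
        (fun y => ∑ j ∈ univ.erase i,
          (ρ j / (1 - ρ i)) * ((fun i y => l * P i y + (1 - l) * Q i y) j y))
      ≤ ((ρ i : ℝ) : EReal) *
          ((l : EReal) * KL (P i) (fun y => ∑ j ∈ univ.erase i, (ρ j / (1 - ρ i)) * P j y)
          + ((1 - l : ℝ) : EReal) *
              KL (Q i) (fun y => ∑ j ∈ univ.erase i, (ρ j / (1 - ρ i)) * Q j y)) := by
        rw [hfun]
        exact mul_le_mul_of_nonneg_left hKL (EReal.coe_nonneg.2 (hρ0 i))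
    _ = (l : EReal) * (((ρ i : ℝ) : EReal) *
          KL (P i) (fun y => ∑ j ∈ univ.erase i, (ρ j / (1 - ρ i)) * P j y))
        + ((1 - l : ℝ) : EReal) * (((ρ i : ℝ) : EReal) *
          KL (Q i) (fun y => ∑ j ∈ univ.erase i, (ρ j / (1 - ρ i)) * Q j y)) := by
        rw [ereal_coe_mul_add (ρ i) (hρ0 i)]
        rw [mul_left_comm ((ρ i : ℝ) : EReal), mul_left_comm ((ρ i : ℝ) : EReal)]
end

section
/- Let (ξ(t))_{t∈ℕ} be an integrable real-valued process adapted to a filtration (F_t)_{t∈ℕ} on a probability space, with ξ(0) = ξ₀ a deterministic constant. Suppose there exist constants K₁, K₂, K₃ > 0 with K₁ ≤ K₃ and K₂ ≤ K₃ such that almost surely, for every t ∈ ℕ: E[ξ(t+1) | F_t] ≥ ξ(t) + K₁ on the event {ξ(t) < 0}; E[ξ(t+1) | F_t] ≥ ξ(t) + K₂ on the event {ξ(t) ≥ 0}; and |ξ(t+1) − ξ(t)| ≤ K₃ on the event {max(ξ(t), ξ(t+1)) ≥ 0}. For B > 0 let υ := min{t ∈ ℕ : ξ(t) ≥ B}.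 Then E[υ] ≤ (B − ξ₀)/K₂ + ξ₀·1{ξ₀ < 0}·(1/K₂ − 1/K₁) + 3K₃²/(K₁K₂); in particular υ is finite almost surely. -/
open MeasureTheory Real
open scoped ENNReal

noncomputable def Gfun (α t : ℝ) : ℝ := t - (1 - Real.exp (-(α*t)))/α
noncomputable def Ffun (α t : ℝ) : ℝ := if 0 ≤ t then Gfun α t else 0
noncomputable def Fder (α t : ℝ) : ℝ := if 0 ≤ t then 1 - Real.exp (-(α*t)) else 0

lemma one_sub_exp_le (s : ℝ) : 1 - Real.exp (-s) ≤ s := by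
  nlinarith [Real.add_one_le_exp (-s)]

lemma Fder_nonneg {α : ℝ} (hα : 0 < α) (t : ℝ) : 0 ≤ Fder α t := by
  unfold Fder; split
  · have h : Real.exp (-(α*t)) ≤ 1 := by
      rw [Real.exp_le_one_iff]; nlinarith
    linarith
  · exact le_rfl

lemma Fder_le_one {α : ℝ} (t : ℝ) : Fder α t ≤ 1 := by
  unfold Fder; split
  · nlinarith [Real.exp_pos (-(α*t))]
  · norm_num

lemma Ffun_nonneg {α : ℝ} (hα : 0 < α) (t : ℝ) : 0 ≤ Ffun α t := by
  unfold Ffun Gfun; split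
  · have h := one_sub_exp_le (α*t)
    have : (1 - Real.exp (-(α*t)))/α ≤ t := by
      rw [div_le_iff₀ hα]; nlinarith
    linarith
  · exact le_rfl

lemma Ffun_le {α : ℝ} (hα : 0 < α) {t : ℝ} (ht : 0 ≤ t) : Ffun α t ≤ t := by
  unfold Ffun Gfun
  rw [if_pos ht]
  have h1 : Real.exp (-(α*t)) ≤ 1 := by rw [Real.exp_le_one_iff]; nlinarith
  have h2 : 0 ≤ (1 - Real.exp (-(α*t)))/α := by
    apply div_nonneg (by linarith) hα.le
  linarith

lemma Ffun_ge {α : ℝ} (hα : 0 < α) (t : ℝ) : t - 1/α ≤ Ffun α t := by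
  unfold Ffun Gfun
  split
  · have h1 : 0 < Real.exp (-(α*t)) := Real.exp_pos _
    have h2 : (1 - Real.exp (-(α*t)))/α ≤ 1/α := by gcongr; linarith
    linarith
  · rename_i h
    push_neg at h
    have h' : 0 < 1/α := by positivity
    linarith

lemma Ffun_chord_upper {α : ℝ} (hα : 0 < α) {u v : ℝ} (huv : u ≤ v) :
    Ffun α v - Ffun α u ≤ Fder α v * (v - u) := by
  unfold Ffun Fder Gfun
  rcases le_or_gt 0 u with hu | hu
  · have hv : 0 ≤ v := hu.trans huv
    rw [if_pos hu, if_pos hv, if_pos hv]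
    have key : α * (v - u) ≤ Real.exp (α * (v-u)) - 1 := by
      nlinarith [Real.add_one_le_exp (α*(v-u))]
    have e1 : Real.exp (-(α*u)) = Real.exp (α*(v-u)) * Real.exp (-(α*v)) := by
      rw [← Real.exp_add]; ring_nf
    have hev : 0 < Real.exp (-(α*v)) := Real.exp_pos _
    have h3 : α * (v-u) * Real.exp (-(α*v)) ≤ Real.exp (-(α*u)) - Real.exp (-(α*v)) := by
      rw [e1]; nlinarith
    have h4 : Real.exp (-(α*v)) * (v-u) ≤ (Real.exp (-(α*u)) - Real.exp (-(α*v)))/α := by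
      rw [le_div_iff₀ hα]; nlinarith
    have expand : v - (1 - Real.exp (-(α*v)))/α - (u - (1 - Real.exp (-(α*u)))/α)
        = (v-u) - (Real.exp (-(α*u)) - Real.exp (-(α*v)))/α := by ring
    have expand2 : (1 - Real.exp (-(α*v))) * (v - u)
        = (v-u) - Real.exp (-(α*v)) * (v-u) := by ring
    linarith
  · rw [if_neg (not_le.mpr hu)]
    rcases le_or_gt 0 v with hv | hv
    · rw [if_pos hv, if_pos hv]
      have hprod : Real.exp (-(α*v)) * Real.exp (α*v) = 1 := by
        rw [← Real.exp_add]; norm_num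
      have key : α * v * Real.exp (-(α*v)) ≤ 1 - Real.exp (-(α*v)) := by
        nlinarith [Real.add_one_le_exp (α*v), Real.exp_pos (-(α*v))]
      have h1 : v * Real.exp (-(α*v)) ≤ (1 - Real.exp (-(α*v)))/α := by
        rw [le_div_iff₀ hα]; nlinarith
      have hc : Real.exp (-(α*v)) ≤ 1 := by rw [Real.exp_le_one_iff]; nlinarith
      have expand2 : (1 - Real.exp (-(α*v))) * (v - u)
          = v - Real.exp (-(α*v)) * v - (1 - Real.exp (-(α*v))) * u := by ring
      have hu2 : (1 - Real.exp (-(α*v))) * u ≤ 0 := by nlinarith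
      nlinarith
    · rw [if_neg (not_le.mpr hv), if_neg (not_le.mpr hv)]
      norm_num

lemma Ffun_chord_lower {α : ℝ} (hα : 0 < α) {u v : ℝ} (huv : u ≤ v) :
    Fder α u * (v - u) ≤ Ffun α v - Ffun α u := by
  unfold Ffun Fder Gfun
  rcases le_or_gt 0 u with hu | hu
  · have hv : 0 ≤ v := hu.trans huv
    rw [if_pos hu, if_pos hu, if_pos hv]
    have key : 1 - Real.exp (-(α*(v-u))) ≤ α * (v-u) := one_sub_exp_le _
    have e1 : Real.exp (-(α*v)) = Real.exp (-(α*(v-u))) * Real.exp (-(α*u)) := by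
      rw [← Real.exp_add]; ring_nf
    have heu : 0 < Real.exp (-(α*u)) := Real.exp_pos _
    have h1 : Real.exp (-(α*u)) - Real.exp (-(α*v)) ≤ Real.exp (-(α*u)) * (α * (v-u)) := by
      rw [e1]; nlinarith
    have h2 : (Real.exp (-(α*u)) - Real.exp (-(α*v)))/α ≤ Real.exp (-(α*u)) * (v-u) := by
      rw [div_le_iff₀ hα]; nlinarith
    have expand : v - (1 - Real.exp (-(α*v)))/α - (u - (1 - Real.exp (-(α*u)))/α)
        = (v-u) - (Real.exp (-(α*u)) - Real.exp (-(α*v)))/α := by ring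
    have expand2 : (1 - Real.exp (-(α*u))) * (v - u)
        = (v-u) - Real.exp (-(α*u)) * (v-u) := by ring
    linarith
  · rw [if_neg (not_le.mpr hu), if_neg (not_le.mpr hu)]
    rcases le_or_gt 0 v with hv | hv
    · rw [if_pos hv]
      have h := Ffun_nonneg hα v
      unfold Ffun at h
      rw [if_pos hv] at h
      unfold Gfun at h
      simp only [zero_mul, sub_zero]
      linarith
    · rw [if_neg (not_le.mpr hv)]; norm_num

lemma Fder_lip {α : ℝ} (hα : 0 < α) {u v : ℝ} (huv : u ≤ v) :
    Fder α v - Fder α u ≤ α * Real.exp (-(α * max u 0)) * (v - u) := by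
  unfold Fder
  rcases le_or_gt 0 u with hu | hu
  · have hv : 0 ≤ v := hu.trans huv
    rw [if_pos hu, if_pos hv, max_eq_left hu]
    have e1 : Real.exp (-(α*v)) = Real.exp (-(α*(v-u))) * Real.exp (-(α*u)) := by
      rw [← Real.exp_add]; ring_nf
    have key : 1 - Real.exp (-(α*(v-u))) ≤ α * (v-u) := one_sub_exp_le _
    have heu : 0 < Real.exp (-(α*u)) := Real.exp_pos _
    rw [e1]; nlinarith
  · rw [if_neg (not_le.mpr hu), max_eq_right hu.le]
    rcases le_or_gt 0 v with hv | hv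
    · rw [if_pos hv]
      have h := one_sub_exp_le (α*v)
      simp only [neg_zero, mul_zero, Real.exp_zero]
      nlinarith
    · rw [if_neg (not_le.mpr hv)]
      simp only [neg_zero, mul_zero, Real.exp_zero]
      nlinarith

lemma Ffun_continuous (α : ℝ) : Continuous (Ffun α) := by
  unfold Ffun
  apply Continuous.if_le ?_ continuous_const continuous_const continuous_id
  · intro x hx
    unfold Gfun
    have hx' : x = 0 := by simpa using hx.symm
    rw [hx']
    simp
  · unfold Gfun
    fun_prop

lemma Fder_continuous (α : ℝ) : Continuous (Fder α) := by
  unfold Fder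
  apply Continuous.if_le ?_ continuous_const continuous_const continuous_id
  · intro x hx
    have hx' : x = 0 := by simpa using hx.symm
    rw [hx']
    simp
  · fun_prop

lemma Ffun_of_nonpos {α t : ℝ} (ht : t ≤ 0) : Ffun α t = 0 := by
  unfold Ffun
  rcases lt_or_eq_of_le ht with h | h
  · rw [if_neg (not_le.mpr h)]
  · rw [h, if_pos le_rfl]
    unfold Gfun
    simp

lemma Fder_of_nonpos {α t : ℝ} (ht : t ≤ 0) : Fder α t = 0 := by
  unfold Fder
  rcases lt_or_eq_of_le ht with h | h
  · rw [if_neg (not_le.mpr h)]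
  · rw [h, if_pos le_rfl]
    simp

lemma one_sub_Fder (α t : ℝ) : 1 - Fder α t = Real.exp (-(α * max t 0)) := by
  unfold Fder
  rcases le_or_gt 0 t with h | h
  · rw [if_pos h, max_eq_left h]; ring
  · rw [if_neg (not_le.mpr h), max_eq_right h.le]; simp


lemma Ffun_taylor {α K₃ : ℝ} (hα : 0 < α) (hK₃ : 0 < K₃) {a b : ℝ} (hab : |b - a| ≤ K₃) :
    Ffun α b - Ffun α a - Fder α a * (b - a)
      ≤ α * K₃^2 * Real.exp (-(α * max (a - K₃) 0)) := by
  have habs := abs_le.mp hab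
  have hmax : ∀ u v : ℝ, u ≤ v → Real.exp (-(α * max v 0)) ≤ Real.exp (-(α * max u 0)) := by
    intro u v huv
    apply Real.exp_le_exp.mpr
    have h := max_le_max huv (le_refl (0:ℝ))
    nlinarith
  rcases le_total a b with h | h
  · have h1 := Ffun_chord_upper hα h
    have h2 := Fder_lip hα h
    have e1 : Real.exp (-(α * max a 0)) ≤ Real.exp (-(α * max (a - K₃) 0)) :=
      hmax _ _ (by linarith)
    have hba : 0 ≤ b - a := by linarith
    have p1 : Ffun α b - Ffun α a - Fder α a * (b-a) ≤ (Fder α b - Fder α a) * (b - a) := by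
      nlinarith
    have p2 : (Fder α b - Fder α a) * (b - a)
        ≤ (α * Real.exp (-(α * max a 0)) * (b - a)) * (b - a) :=
      mul_le_mul_of_nonneg_right h2 hba
    have p3 : (α * Real.exp (-(α * max a 0)) * (b - a)) * (b - a)
        ≤ α * K₃^2 * Real.exp (-(α * max (a-K₃) 0)) := by
      have hbK : b - a ≤ K₃ := habs.2
      have he1 : (0:ℝ) < Real.exp (-(α * max a 0)) := Real.exp_pos _
      have q1 : (b-a)*(b-a) ≤ K₃^2 := by nlinarith
      calc (α * Real.exp (-(α * max a 0)) * (b - a)) * (b - a)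
          = (α * Real.exp (-(α * max a 0))) * ((b-a)*(b-a)) := by ring
        _ ≤ (α * Real.exp (-(α * max a 0))) * K₃^2 :=
            mul_le_mul_of_nonneg_left q1 (by positivity)
        _ = (α * K₃^2) * Real.exp (-(α * max a 0)) := by ring
        _ ≤ α * K₃^2 * Real.exp (-(α * max (a-K₃) 0)) :=
            mul_le_mul_of_nonneg_left e1 (by positivity)
    linarith
  · have h1 := Ffun_chord_lower hα h
    have h2 := Fder_lip hα h
    have e1 : Real.exp (-(α * max b 0)) ≤ Real.exp (-(α * max (a - K₃) 0)) :=
      hmax _ _ (by linarith [habs.1])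
    have hba : 0 ≤ a - b := by linarith
    have p1 : Ffun α b - Ffun α a - Fder α a * (b-a) ≤ (Fder α a - Fder α b) * (a - b) := by
      nlinarith
    have p2 : (Fder α a - Fder α b) * (a - b)
        ≤ (α * Real.exp (-(α * max b 0)) * (a - b)) * (a - b) :=
      mul_le_mul_of_nonneg_right h2 hba
    have p3 : (α * Real.exp (-(α * max b 0)) * (a - b)) * (a - b)
        ≤ α * K₃^2 * Real.exp (-(α * max (a-K₃) 0)) := by
      have hbK : a - b ≤ K₃ := by linarith [habs.1]
      have he1 : (0:ℝ) < Real.exp (-(α * max b 0)) := Real.exp_pos _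
      have q1 : (a-b)*(a-b) ≤ K₃^2 := by nlinarith
      calc (α * Real.exp (-(α * max b 0)) * (a - b)) * (a - b)
          = (α * Real.exp (-(α * max b 0))) * ((a-b)*(a-b)) := by ring
        _ ≤ (α * Real.exp (-(α * max b 0))) * K₃^2 :=
            mul_le_mul_of_nonneg_left q1 (by positivity)
        _ = (α * K₃^2) * Real.exp (-(α * max b 0)) := by ring
        _ ≤ α * K₃^2 * Real.exp (-(α * max (a-K₃) 0)) :=
            mul_le_mul_of_nonneg_left e1 (by positivity)
    linarith

lemma crossing_aux {Ω : Type*} {mΩ : MeasurableSpace Ω} (μ : Measure Ω) [IsProbabilityMeasure μ]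
    (𝓕 : Filtration ℕ mΩ) (ξ : ℕ → Ω → ℝ)
    (hadapted : ∀ t, Measurable[𝓕 t] (ξ t)) (hint : ∀ t, Integrable (ξ t) μ)
    (ξ₀ : ℝ) (hξ₀ : ∀ ω, ξ 0 ω = ξ₀)
    (K₁ K₂ K₃ : ℝ) (hK₁ : 0 < K₁) (hK₂ : 0 < K₂) (hK₃ : 0 < K₃)
    (hdrift : ∀ t : ℕ, ∀ᵐ ω ∂μ,
      (ξ t ω < 0 → ξ t ω + K₁ ≤ (μ[ξ (t + 1)|𝓕 t]) ω) ∧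
      (0 ≤ ξ t ω → ξ t ω + K₂ ≤ (μ[ξ (t + 1)|𝓕 t]) ω))
    (hjump : ∀ t : ℕ, ∀ᵐ ω ∂μ,
      0 ≤ max (ξ t ω) (ξ (t + 1) ω) → |ξ (t + 1) ω - ξ t ω| ≤ K₃)
    (B : ℝ) (hB : 0 < B) (hξ₀B : ξ₀ < B)
    (g s h : ℝ → ℝ) (L : ℝ) (hL : 0 ≤ L)
    (hgc : Continuous g) (hsc : Continuous s) (hhc : Continuous h)
    (hgL : ∀ x, |g x| ≤ L * |x|)
    (hsL : ∀ x, |s x| ≤ L) (hhL : ∀ x, |h x| ≤ L)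
    (hmono : Monotone g)
    (hgneg : ∀ x, x < 0 → g x = x / K₁)
    (hglin : ∀ y, y ≤ K₃ → y / K₁ ≤ g y)
    (hsnn : ∀ x, 0 ≤ x → 0 ≤ s x)
    (H3 : ∀ x, 0 ≤ x → ∀ y, |y - x| ≤ K₃ → g x + s x * (y - x) - h x ≤ g y)
    (H4 : ∀ x, 0 ≤ x → 1 + h x ≤ s x * K₂) :
    (∫⁻ ω, (⨅ (t : ℕ) (_ : B ≤ ξ t ω), (t : ℝ≥0∞)) ∂μ)
      ≤ ENNReal.ofReal (g (B + K₃) - g ξ₀) := by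
  classical
  set A : ℕ → Set Ω := fun n => {ω | ∀ k ≤ n, ξ k ω < B} with hA
  have hXmeas : ∀ t, Measurable (ξ t) := fun t => (hadapted t).mono (𝓕.le t) le_rfl
  have hAmeasF : ∀ n, MeasurableSet[𝓕 n] (A n) := by
    intro n
    have : A n = ⋂ (k : ℕ) (_ : k ≤ n), {ω | ξ k ω < B} := by
      ext ω; simp [hA, Set.mem_iInter]
    rw [this]
    exact MeasurableSet.iInter fun k => MeasurableSet.iInter fun hk =>
      ((hadapted k).mono (𝓕.mono hk) le_rfl) measurableSet_Iio
  have hAmeas : ∀ n, MeasurableSet (A n) := fun n => 𝓕.le n _ (hAmeasF n)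
  have hAanti : ∀ {m n : ℕ}, m ≤ n → A n ⊆ A m := by
    intro m n hmn ω hω k hk; exact hω k (hk.trans hmn)
  -- integrability of g ∘ ξ t
  have hgint : ∀ t, Integrable (fun ω => g (ξ t ω)) μ := by
    intro t
    refine Integrable.mono ((hint t).abs.const_mul L)
      ((hgc.measurable.comp (hXmeas t)).aestronglyMeasurable) ?_
    filter_upwards with ω
    simp only [Real.norm_eq_abs]
    exact le_trans (hgL _) (le_abs_self _)
  have hhint : ∀ t, Integrable (fun ω => h (ξ t ω)) μ := by
    intro t
    refine Integrable.mono (integrable_const L)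
      ((hhc.measurable.comp (hXmeas t)).aestronglyMeasurable) ?_
    filter_upwards with ω
    rw [Real.norm_eq_abs, Real.norm_eq_abs]
    exact (hhL _).trans (le_abs_self _)
  have hprodint : ∀ n m, Integrable (fun ω => s (ξ n ω) * ξ m ω) μ := by
    intro n m
    refine Integrable.mono ((hint m).abs.const_mul L)
      (((hsc.measurable.comp (hXmeas n)).mul (hXmeas m)).aestronglyMeasurable) ?_
    filter_upwards with ω
    rw [Real.norm_eq_abs, Real.norm_eq_abs]
    refine le_trans ?_ (le_abs_self _)
    rw [abs_mul]
    exact mul_le_mul_of_nonneg_right (hsL _) (abs_nonneg _)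
  -- step estimate
  have hstep : ∀ n, (μ (A n)).toReal ≤ ∫ ω in A n, (g (ξ (n+1) ω) - g (ξ n ω)) ∂μ := by
    intro n
    have key : ∀ S : Set Ω, MeasurableSet[𝓕 n] S →
        ((∀ ω ∈ S, ξ n ω < 0) ∨ (∀ ω ∈ S, 0 ≤ ξ n ω)) →
        (μ S).toReal ≤ ∫ ω in S, (g (ξ (n+1) ω) - g (ξ n ω)) ∂μ := by
      intro S hSF hcase
      have hSm : MeasurableSet S := 𝓕.le n S hSF
      have hsub : ∫ ω in S, (g (ξ (n+1) ω) - g (ξ n ω)) ∂μ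
          = ∫ ω in S, g (ξ (n+1) ω) ∂μ - ∫ ω in S, g (ξ n ω) ∂μ :=
        integral_sub (hgint (n+1)).integrableOn (hgint n).integrableOn
      have hmain : ∫ ω in S, (g (ξ n ω) + 1) ∂μ ≤ ∫ ω in S, g (ξ (n+1) ω) ∂μ := by
        rcases hcase with hneg | hpos
        · -- negative regime
          have c1 : ∫ ω in S, ξ (n+1) ω / K₁ ∂μ ≤ ∫ ω in S, g (ξ (n+1) ω) ∂μ := by
            refine integral_mono_ae ((hint (n+1)).integrableOn.div_const K₁)
              (hgint (n+1)).integrableOn ?_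
            filter_upwards [ae_restrict_of_ae (hjump n), ae_restrict_mem hSm] with ω hj hw
            refine hglin _ ?_
            rcases le_or_gt 0 (ξ (n+1) ω) with h0 | h0
            · have hj' := hj (le_trans h0 (le_max_right _ _))
              have habs := abs_le.mp hj'
              have hx := hneg ω hw
              linarith [habs.2]
            · linarith [hK₃]
          have c2 : ∫ ω in S, ξ (n+1) ω / K₁ ∂μ = (∫ ω in S, ξ (n+1) ω ∂μ) / K₁ :=
            integral_div _ _
          have c3 : ∫ ω in S, ξ (n+1) ω ∂μ = ∫ ω in S, (μ[ξ (n+1)|𝓕 n]) ω ∂μ :=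
            (setIntegral_condExp (𝓕.le n) (hint (n+1)) hSF).symm
          have c4 : ∫ ω in S, (ξ n ω + K₁) ∂μ ≤ ∫ ω in S, (μ[ξ (n+1)|𝓕 n]) ω ∂μ := by
            refine integral_mono_ae ((hint n).add (integrable_const K₁)).integrableOn
              integrable_condExp.integrableOn ?_
            filter_upwards [ae_restrict_of_ae (hdrift n), ae_restrict_mem hSm] with ω hd hw
            exact hd.1 (hneg ω hw)
          have c5 : ∫ ω in S, (g (ξ n ω) + 1) ∂μ = (∫ ω in S, (ξ n ω + K₁) ∂μ) / K₁ := by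
            rw [← integral_div]
            refine setIntegral_congr_fun hSm fun ω hw => ?_
            rw [hgneg _ (hneg ω hw)]
            field_simp
          rw [c5]
          calc (∫ ω in S, (ξ n ω + K₁) ∂μ) / K₁
              ≤ (∫ ω in S, (μ[ξ (n+1)|𝓕 n]) ω ∂μ) / K₁ := by gcongr
            _ = (∫ ω in S, ξ (n+1) ω ∂μ) / K₁ := by rw [c3]
            _ = ∫ ω in S, ξ (n+1) ω / K₁ ∂μ := c2.symm
            _ ≤ _ := c1
        · -- nonnegative regime
          have hsint : Integrable (fun ω => s (ξ n ω)) μ := by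
            refine Integrable.mono (integrable_const L)
              ((hsc.measurable.comp (hXmeas n)).aestronglyMeasurable) ?_
            filter_upwards with ω
            simp only [Real.norm_eq_abs]
            exact (hsL _).trans (le_abs_self _)
          have intA : Integrable (fun ω => g (ξ n ω) - s (ξ n ω) * ξ n ω - h (ξ n ω)) μ :=
            ((hgint n).sub (hprodint n n)).sub (hhint n)
          have intB : Integrable (fun ω => s (ξ n ω) * (ξ n ω + K₂)) μ := by
            refine ((hprodint n n).add (hsint.const_mul K₂)).congr ?_
            filter_upwards with ω
            simp only [Pi.add_apply, Pi.sub_apply]; ring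
          have intC : Integrable (fun ω => g (ξ n ω) + s (ξ n ω) * (ξ (n+1) ω - ξ n ω)
              - h (ξ n ω)) μ := by
            refine (intA.add (hprodint n (n+1))).congr ?_
            filter_upwards with ω
            simp only [Pi.add_apply, Pi.sub_apply]; ring
          have intD : Integrable (fun ω => g (ξ n ω) + (s (ξ n ω) * K₂ - h (ξ n ω))) μ := by
            refine (((hgint n).sub (hhint n)).add (hsint.const_mul K₂)).congr ?_
            filter_upwards with ω
            simp only [Pi.add_apply, Pi.sub_apply]; ring
          have iring : ∀ f₁ f₂ : Ω → ℝ, (∀ ω, f₁ ω = f₂ ω) →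
              ∫ ω in S, f₁ ω ∂μ = ∫ ω in S, f₂ ω ∂μ := by
            intro f₁ f₂ hf
            exact integral_congr_ae (Filter.Eventually.of_forall hf)
          have c1 : ∫ ω in S, (g (ξ n ω) + s (ξ n ω) * (ξ (n+1) ω - ξ n ω) - h (ξ n ω)) ∂μ
              ≤ ∫ ω in S, g (ξ (n+1) ω) ∂μ := by
            refine integral_mono_ae intC.integrableOn (hgint (n+1)).integrableOn ?_
            filter_upwards [ae_restrict_of_ae (hjump n), ae_restrict_mem hSm] with ω hj hw
            have h0 : 0 ≤ ξ n ω := hpos ω hw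
            have hj' := hj (le_trans h0 (le_max_left _ _))
            exact H3 _ h0 _ hj'
          have c2 : ∫ ω in S, (g (ξ n ω) + s (ξ n ω) * (ξ (n+1) ω - ξ n ω) - h (ξ n ω)) ∂μ
              = (∫ ω in S, (g (ξ n ω) - s (ξ n ω) * ξ n ω - h (ξ n ω)) ∂μ)
                + ∫ ω in S, s (ξ n ω) * ξ (n+1) ω ∂μ := by
            rw [← integral_add intA.integrableOn (hprodint n (n+1)).integrableOn]
            exact iring _ _ fun ω => by ring
          -- pull-out property
          have hsXsm : StronglyMeasurable[𝓕 n] (fun ω => s (ξ n ω)) :=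
            (hsc.measurable.comp (hadapted n)).stronglyMeasurable
          have hpull : (μ[(fun ω => s (ξ n ω)) * ξ (n+1)|𝓕 n])
              =ᵐ[μ] (fun ω => s (ξ n ω)) * μ[ξ (n+1)|𝓕 n] :=
            condExp_mul_of_stronglyMeasurable_left hsXsm (hprodint n (n+1)) (hint (n+1))
          have c3 : ∫ ω in S, s (ξ n ω) * ξ (n+1) ω ∂μ
              = ∫ ω in S, s (ξ n ω) * (μ[ξ (n+1)|𝓕 n]) ω ∂μ := by
            have e1 : ∫ ω in S, s (ξ n ω) * ξ (n+1) ω ∂μ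
                = ∫ ω in S, (μ[(fun ω => s (ξ n ω)) * ξ (n+1)|𝓕 n]) ω ∂μ :=
              (setIntegral_condExp (𝓕.le n) (hprodint n (n+1)) hSF).symm
            rw [e1]
            refine integral_congr_ae (ae_restrict_of_ae ?_)
            filter_upwards [hpull] with ω hω
            exact hω
          have c4 : ∫ ω in S, s (ξ n ω) * (ξ n ω + K₂) ∂μ
              ≤ ∫ ω in S, s (ξ n ω) * (μ[ξ (n+1)|𝓕 n]) ω ∂μ := by
            refine integral_mono_ae intB.integrableOn ?_ ?_
            · refine Integrable.integrableOn ?_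
              refine Integrable.mono ((integrable_condExp (m := 𝓕 n) (f := ξ (n+1)) (μ := μ)).abs.const_mul L)
                (((hsc.measurable.comp (hXmeas n)).mul
                  (stronglyMeasurable_condExp.mono (𝓕.le n)).measurable).aestronglyMeasurable) ?_
              filter_upwards with ω
              rw [Real.norm_eq_abs, Real.norm_eq_abs]
              refine le_trans ?_ (le_abs_self _)
              rw [abs_mul]
              exact mul_le_mul_of_nonneg_right (hsL _) (abs_nonneg _)
            · filter_upwards [ae_restrict_of_ae (hdrift n), ae_restrict_mem hSm] with ω hd hw
              exact mul_le_mul_of_nonneg_left (hd.2 (hpos ω hw)) (hsnn _ (hpos ω hw))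
          have c5 : ∫ ω in S, (g (ξ n ω) + 1) ∂μ
              ≤ (∫ ω in S, (g (ξ n ω) - s (ξ n ω) * ξ n ω - h (ξ n ω)) ∂μ)
                + ∫ ω in S, s (ξ n ω) * (ξ n ω + K₂) ∂μ := by
            have e : (∫ ω in S, (g (ξ n ω) - s (ξ n ω) * ξ n ω - h (ξ n ω)) ∂μ)
                + ∫ ω in S, s (ξ n ω) * (ξ n ω + K₂) ∂μ
                = ∫ ω in S, (g (ξ n ω) + (s (ξ n ω) * K₂ - h (ξ n ω))) ∂μ := by
              rw [← integral_add intA.integrableOn intB.integrableOn]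
              exact iring _ _ fun ω => by ring
            rw [e]
            refine integral_mono_ae ((hgint n).add (integrable_const 1)).integrableOn
              intD.integrableOn ?_
            filter_upwards [ae_restrict_mem hSm] with ω hw
            have := H4 _ (hpos ω hw)
            linarith
          calc ∫ ω in S, (g (ξ n ω) + 1) ∂μ ≤ _ := c5
            _ ≤ (∫ ω in S, (g (ξ n ω) - s (ξ n ω) * ξ n ω - h (ξ n ω)) ∂μ)
                + ∫ ω in S, s (ξ n ω) * (μ[ξ (n+1)|𝓕 n]) ω ∂μ := by linarith [c4]
            _ = (∫ ω in S, (g (ξ n ω) - s (ξ n ω) * ξ n ω - h (ξ n ω)) ∂μ)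
                + ∫ ω in S, s (ξ n ω) * ξ (n+1) ω ∂μ := by rw [c3]
            _ = ∫ ω in S, (g (ξ n ω) + s (ξ n ω) * (ξ (n+1) ω - ξ n ω) - h (ξ n ω)) ∂μ :=
              c2.symm
            _ ≤ _ := c1
      have hadd : ∫ ω in S, (g (ξ n ω) + 1) ∂μ
          = ∫ ω in S, g (ξ n ω) ∂μ + (μ S).toReal := by
        rw [integral_add (hgint n).integrableOn (integrable_const 1)]
        simp
        rfl
      rw [hsub]
      rw [hadd] at hmain
      linarith
    -- split A n
    have hdecomp : A n = (A n ∩ {ω | ξ n ω < 0}) ∪ (A n ∩ {ω | 0 ≤ ξ n ω}) := by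
      ext ω; by_cases h0 : ξ n ω < 0 <;> simp [h0, le_of_not_gt, Set.mem_inter_iff] <;> tauto
    have hm1 : MeasurableSet[𝓕 n] (A n ∩ {ω | ξ n ω < 0}) :=
      (hAmeasF n).inter ((hadapted n) measurableSet_Iio)
    have hm2 : MeasurableSet[𝓕 n] (A n ∩ {ω | 0 ≤ ξ n ω}) :=
      (hAmeasF n).inter ((hadapted n) measurableSet_Ici)
    have hdisj : Disjoint (A n ∩ {ω | ξ n ω < 0}) (A n ∩ {ω | 0 ≤ ξ n ω}) := by
      refine Set.disjoint_left.mpr ?_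
      rintro ω ⟨-, h1⟩ ⟨-, h2⟩
      simp only [Set.mem_setOf_eq] at h1 h2
      linarith
    have k1 := key _ hm1 (Or.inl fun ω hw => hw.2)
    have k2 := key _ hm2 (Or.inr fun ω hw => hw.2)
    have hμadd : (μ (A n)).toReal
        = (μ (A n ∩ {ω | ξ n ω < 0})).toReal + (μ (A n ∩ {ω | 0 ≤ ξ n ω})).toReal := by
      conv_lhs => rw [hdecomp]
      rw [measure_union hdisj (𝓕.le n _ hm2), ENNReal.toReal_add
        (measure_ne_top μ _) (measure_ne_top μ _)]
    have hiadd : ∫ ω in A n, (g (ξ (n+1) ω) - g (ξ n ω)) ∂μ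
        = (∫ ω in A n ∩ {ω | ξ n ω < 0}, (g (ξ (n+1) ω) - g (ξ n ω)) ∂μ)
          + ∫ ω in A n ∩ {ω | 0 ≤ ξ n ω}, (g (ξ (n+1) ω) - g (ξ n ω)) ∂μ := by
      have intgd : Integrable (fun ω => g (ξ (n+1) ω) - g (ξ n ω)) μ :=
        (hgint (n+1)).sub (hgint n)
      conv_lhs => rw [hdecomp]
      exact setIntegral_union hdisj (𝓕.le n _ hm2)
        intgd.integrableOn intgd.integrableOn
    rw [hμadd, hiadd]
    exact add_le_add k1 k2
  -- pointwise identity for the hitting time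
  have hpt : ∀ ω, (⨅ (t : ℕ) (_ : B ≤ ξ t ω), (t : ℝ≥0∞))
      = ∑' n, (A n).indicator (fun _ => (1:ℝ≥0∞)) ω := by
    intro ω
    by_cases hc : ∃ t, B ≤ ξ t ω
    · have hmem : ∀ n, ω ∈ A n ↔ n < Nat.find hc := by
        intro n
        constructor
        · intro hw
          by_contra hn
          push_neg at hn
          exact absurd (Nat.find_spec hc) (not_le.mpr (hw _ hn))
        · intro hn k hk
          exact not_le.mp (Nat.find_min hc (lt_of_le_of_lt hk hn))
      have hleft : (⨅ (t : ℕ) (_ : B ≤ ξ t ω), (t : ℝ≥0∞)) = (Nat.find hc : ℝ≥0∞) := by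
        apply le_antisymm
        · exact iInf_le_of_le (Nat.find hc) (iInf_le_of_le (Nat.find_spec hc) le_rfl)
        · exact le_iInf₂ fun t ht => by exact_mod_cast Nat.find_min' hc ht
      have hright : ∑' n, (A n).indicator (fun _ => (1:ℝ≥0∞)) ω = (Nat.find hc : ℝ≥0∞) := by
        have hind : ∀ n, (A n).indicator (fun _ => (1:ℝ≥0∞)) ω
            = if n < Nat.find hc then 1 else 0 := by
          intro n
          by_cases hn : n < Nat.find hc
          · rw [if_pos hn, Set.indicator_of_mem ((hmem n).mpr hn)]
          · rw [if_neg hn, Set.indicator_of_notMem (fun hw => hn ((hmem n).mp hw))]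
        rw [tsum_congr hind,
          tsum_eq_sum (s := Finset.range (Nat.find hc))
            (fun b hb => if_neg (fun hb' => hb (Finset.mem_range.mpr hb'))),
          Finset.sum_congr rfl (fun i hi => if_pos (Finset.mem_range.mp hi))]
        simp
      rw [hleft, hright]
    · push_neg at hc
      have h1 : ∀ t:ℕ, (⨅ (_ : B ≤ ξ t ω), ((t:ℕ) : ℝ≥0∞)) = ⊤ :=
        fun t => iInf_neg (not_le.mpr (hc t))
      have h2 : ∀ n, (A n).indicator (fun _ => (1:ℝ≥0∞)) ω = 1 :=
        fun n => Set.indicator_of_mem (show ω ∈ A n from fun k _ => hc k) _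
      rw [tsum_congr h2]
      simp only [h1, iInf_top]
      exact (ENNReal.tsum_const_eq_top_of_ne_zero one_ne_zero).symm
  have hlint : (∫⁻ ω, (⨅ (t : ℕ) (_ : B ≤ ξ t ω), (t : ℝ≥0∞)) ∂μ) = ∑' n, μ (A n) := by
    rw [lintegral_congr hpt,
      lintegral_tsum (fun n => (measurable_const.indicator (hAmeas n)).aemeasurable)]
    refine tsum_congr fun n => ?_
    rw [lintegral_indicator_const (hAmeas n), one_mul]
  -- telescope bound
  have hjall : ∀ᵐ ω ∂μ, ∀ t, 0 ≤ max (ξ t ω) (ξ (t+1) ω) → |ξ (t+1) ω - ξ t ω| ≤ K₃ :=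
    ae_all_iff.mpr hjump
  have htel : ∀ᵐ ω ∂μ, ∀ N, ∑ n ∈ Finset.range N,
      (A n).indicator (fun ω' => g (ξ (n+1) ω') - g (ξ n ω')) ω ≤ g (B + K₃) - g ξ₀ := by
    filter_upwards [hjall] with ω hj
    intro N
    have hM : ∀ M : ℕ, (∀ k, k < M → ξ k ω < B) → g (ξ M ω) ≤ g (B + K₃) := by
      intro M hk
      match M with
      | 0 => rw [hξ₀]; exact hmono (by linarith)
      | (m+1) =>
        rcases lt_or_ge (ξ (m+1) ω) B with hlt | hge
        · exact hmono (by linarith)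
        · have h2 := hj m (le_max_of_le_right (le_trans hB.le hge))
          have habs := abs_le.mp h2
          have hmB := hk m (Nat.lt_succ_self m)
          exact hmono (by linarith [habs.2])
    by_cases hall : ∀ n, n < N → ω ∈ A n
    · have hT : ∑ n ∈ Finset.range N, (A n).indicator
          (fun ω' => g (ξ (n+1) ω') - g (ξ n ω')) ω = g (ξ N ω) - g (ξ 0 ω) := by
        rw [Finset.sum_congr rfl
          (fun n hn => Set.indicator_of_mem (hall n (Finset.mem_range.mp hn)) _)]
        exact Finset.sum_range_sub (fun n => g (ξ n ω)) N
      rw [hT, hξ₀ ω]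
      have := hM N (fun k hk => (hall k hk) k le_rfl)
      linarith
    · push_neg at hall
      have hex : ∃ n, ω ∉ A n := ⟨hall.choose, hall.choose_spec.2⟩
      have hmlt : Nat.find hex < N := by
        obtain ⟨n0, hn0N, hn0⟩ := hall
        exact lt_of_le_of_lt (Nat.find_min' hex hn0) hn0N
      have hmem : ∀ k, k < Nat.find hex → ω ∈ A k := by
        intro k hk
        by_contra hk'
        exact absurd (Nat.find_min' hex hk') (not_le.mpr hk)
      have hred : ∑ n ∈ Finset.range N, (A n).indicator
            (fun ω' => g (ξ (n+1) ω') - g (ξ n ω')) ω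
          = ∑ n ∈ Finset.range (Nat.find hex), (A n).indicator
            (fun ω' => g (ξ (n+1) ω') - g (ξ n ω')) ω := by
        symm
        apply Finset.sum_subset (Finset.range_subset_range.mpr hmlt.le)
        intro x _ hxm
        have hxge : Nat.find hex ≤ x := le_of_not_gt (fun hh => hxm (Finset.mem_range.mpr hh))
        exact Set.indicator_of_notMem (fun hw => (Nat.find_spec hex) (hAanti hxge hw)) _
      rw [hred, Finset.sum_congr rfl
          (fun n hn => Set.indicator_of_mem (hmem n (Finset.mem_range.mp hn)) _),
        Finset.sum_range_sub (fun n => g (ξ n ω)) (Nat.find hex), hξ₀ ω]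
      have hbound := hM (Nat.find hex) (fun k hk => (hmem k hk) k le_rfl)
      linarith
  -- summation
  have hindint : ∀ n, Integrable ((A n).indicator
      (fun ω' => g (ξ (n+1) ω') - g (ξ n ω'))) μ := by
    intro n
    have intgd : Integrable (fun ω => g (ξ (n+1) ω) - g (ξ n ω)) μ :=
      (hgint (n+1)).sub (hgint n)
    exact intgd.indicator (hAmeas n)
  have hsum : ∀ N, ∑ n ∈ Finset.range N, (μ (A n)).toReal ≤ g (B + K₃) - g ξ₀ := by
    intro N
    have step2 : ∀ n, (μ (A n)).toReal ≤ ∫ ω, (A n).indicator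
        (fun ω' => g (ξ (n+1) ω') - g (ξ n ω')) ω ∂μ := by
      intro n
      rw [integral_indicator (hAmeas n)]
      exact hstep n
    calc ∑ n ∈ Finset.range N, (μ (A n)).toReal
        ≤ ∑ n ∈ Finset.range N, ∫ ω, (A n).indicator
            (fun ω' => g (ξ (n+1) ω') - g (ξ n ω')) ω ∂μ :=
          Finset.sum_le_sum fun n _ => step2 n
      _ = ∫ ω, ∑ n ∈ Finset.range N, (A n).indicator
            (fun ω' => g (ξ (n+1) ω') - g (ξ n ω')) ω ∂μ :=
          (integral_finset_sum _ (fun n _ => hindint n)).symm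
      _ ≤ ∫ _ω, (g (B + K₃) - g ξ₀) ∂μ := by
          refine integral_mono_ae (integrable_finset_sum _ fun n _ => hindint n)
            (integrable_const _) ?_
          filter_upwards [htel] with ω hω using hω N
      _ = g (B + K₃) - g ξ₀ := by simp
  rw [hlint]
  refine ENNReal.tsum_le_of_sum_range_le fun N => ?_
  have he : ∑ n ∈ Finset.range N, μ (A n)
      = ENNReal.ofReal (∑ n ∈ Finset.range N, (μ (A n)).toReal) := by
    rw [ENNReal.ofReal_sum_of_nonneg (fun n _ => ENNReal.toReal_nonneg)]
    exact Finset.sum_congr rfl fun n _ => (ENNReal.ofReal_toReal (measure_ne_top μ _)).symm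
  rw [he]
  exact ENNReal.ofReal_le_ofReal (hsum N)

set_option maxHeartbeats 2000000 in
/-- Lemma 6 (level-crossing bound for a submartingale with two drift regimes):
if `E[ξ(t+1)|F_t] ≥ ξ(t) + K₁` on `{ξ(t) < 0}`, `E[ξ(t+1)|F_t] ≥ ξ(t) + K₂` on
`{ξ(t) ≥ 0}`, and `|ξ(t+1) − ξ(t)| ≤ K₃` whenever `max(ξ(t), ξ(t+1)) ≥ 0`, then
the first time `υ` that `ξ` reaches level `B > 0` satisfies
`E[υ] ≤ (B − ξ₀)/K₂ + ξ₀·1{ξ₀<0}·(1/K₂ − 1/K₁) + 3K₃²/(K₁K₂)`; in particular `υ < ∞` a.s. -/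
theorem level_crossing_time_bound
    {Ω : Type*} {mΩ : MeasurableSpace Ω} (μ : Measure Ω) [IsProbabilityMeasure μ]
    (𝓕 : Filtration ℕ mΩ)
    (ξ : ℕ → Ω → ℝ)
    (hadapted : ∀ t, Measurable[𝓕 t] (ξ t))
    (hint : ∀ t, Integrable (ξ t) μ)
    (ξ₀ : ℝ) (hξ₀ : ∀ ω, ξ 0 ω = ξ₀)
    (K₁ K₂ K₃ : ℝ) (hK₁ : 0 < K₁) (hK₂ : 0 < K₂) (hK₃ : 0 < K₃)
    (hK₁₃ : K₁ ≤ K₃) (hK₂₃ : K₂ ≤ K₃)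
    (hdrift : ∀ t : ℕ, ∀ᵐ ω ∂μ,
      (ξ t ω < 0 → ξ t ω + K₁ ≤ (μ[ξ (t + 1)|𝓕 t]) ω) ∧
      (0 ≤ ξ t ω → ξ t ω + K₂ ≤ (μ[ξ (t + 1)|𝓕 t]) ω))
    (hjump : ∀ t : ℕ, ∀ᵐ ω ∂μ,
      0 ≤ max (ξ t ω) (ξ (t + 1) ω) → |ξ (t + 1) ω - ξ t ω| ≤ K₃)
    (B : ℝ) (hB : 0 < B) :
    (∫⁻ ω, (⨅ (t : ℕ) (_ : B ≤ ξ t ω), (t : ℝ≥0∞)) ∂μ)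
        ≤ ENNReal.ofReal
            ((B - ξ₀) / K₂ + (if ξ₀ < 0 then ξ₀ * (1 / K₂ - 1 / K₁) else 0)
              + 3 * K₃ ^ 2 / (K₁ * K₂))
      ∧ (∀ᵐ ω ∂μ, ∃ t : ℕ, B ≤ ξ t ω) := by
  classical
  by_cases hBle : B ≤ ξ₀
  · constructor
    · have h0 : ∀ ω : Ω, (⨅ (t : ℕ) (_ : B ≤ ξ t ω), (t : ℝ≥0∞)) = 0 := by
        intro ω
        apply le_antisymm ?_ (by simp)
        have hb : B ≤ ξ 0 ω := by rw [hξ₀]; exact hBle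
        exact iInf_le_of_le 0 (iInf_le_of_le hb (by norm_num))
      rw [lintegral_congr h0, lintegral_zero]
      exact (by simp)
    · exact Filter.Eventually.of_forall (fun ω => ⟨0, by rw [hξ₀]; exact hBle⟩)
  push_neg at hBle
  have hbound : (∫⁻ ω, (⨅ (t : ℕ) (_ : B ≤ ξ t ω), (t : ℝ≥0∞)) ∂μ)
      ≤ ENNReal.ofReal
        ((B - ξ₀) / K₂ + (if ξ₀ < 0 then ξ₀ * (1 / K₂ - 1 / K₁) else 0)
          + 3 * K₃ ^ 2 / (K₁ * K₂)) := by
    have key3 : K₃/K₂ ≤ 3*K₃^2/(K₁*K₂) := by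
      rw [div_le_div_iff₀ hK₂ (by positivity)]
      have hint := mul_le_mul_of_nonneg_right hK₁₃ (mul_pos hK₃ hK₂).le
      have r1 : K₃*(K₁*K₂) = K₁*(K₃*K₂) := by ring
      have r2 : 3*K₃^2*K₂ = 3*(K₃*(K₃*K₂)) := by ring
      have r3 : (0:ℝ) ≤ K₃*(K₃*K₂) := by positivity
      linarith
    rcases le_or_gt K₂ K₁ with hc | hc
    · -- easy case: K₂ ≤ K₁
      have h12 : (1:ℝ)/K₁ ≤ 1/K₂ := by
        apply one_div_le_one_div_of_le hK₂ hc
      set gE : ℝ → ℝ := fun x => max (x/K₁) (x/K₂) with hgE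
      have hgEpos : ∀ x, 0 ≤ x → gE x = x/K₂ := by
        intro x hx
        apply max_eq_right
        exact div_le_div_of_nonneg_left hx hK₂ hc
      have hgEneg : ∀ x, x < 0 → gE x = x/K₁ := by
        intro x hx
        apply max_eq_left
        rw [div_le_div_iff₀ hK₂ hK₁]
        have hint := mul_nonneg (neg_nonneg.mpr hx.le) (sub_nonneg.mpr hc)
        have r1 : (-x)*(K₁-K₂) = x*K₂ - x*K₁ := by ring
        linarith
      have haux := crossing_aux μ 𝓕 ξ hadapted hint ξ₀ hξ₀ K₁ K₂ K₃ hK₁ hK₂ hK₃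
        hdrift hjump B hB hBle gE (fun _ => 1/K₂) (fun _ => 0) (1/K₁ + 1/K₂)
        (by positivity)
        ((continuous_id.div_const K₁).max (continuous_id.div_const K₂))
        continuous_const continuous_const
        (by
          intro x
          have e1 : |x/K₁| = (1/K₁) * |x| := by
            rw [abs_div, abs_of_pos hK₁, div_eq_mul_one_div, mul_comm]
          have e2 : |x/K₂| = (1/K₂) * |x| := by
            rw [abs_div, abs_of_pos hK₂, div_eq_mul_one_div, mul_comm]
          have h1 : 0 ≤ (1:ℝ)/K₁ * |x| := by positivity
          have h2 : 0 ≤ (1:ℝ)/K₂ * |x| := by positivity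
          have e3 : (1/K₁ + 1/K₂)*|x| = 1/K₁*|x| + 1/K₂*|x| := by ring
          rw [abs_le]
          constructor
          · have h5 := neg_abs_le (x/K₁)
            have h4 := le_max_left (x/K₁) (x/K₂)
            linarith [e1.le, e1.ge]
          · apply max_le
            · linarith [le_abs_self (x/K₁), e1.le, e1.ge]
            · linarith [le_abs_self (x/K₂), e2.le, e2.ge])
        (by
          intro x
          rw [abs_of_pos (by positivity : (0:ℝ) < 1/K₂)]
          linarith [one_div_pos.mpr hK₁])
        (by intro x; simp; positivity)
        (by
          intro u v huv
          apply max_le_max <;> gcongr)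
        hgEneg
        (fun y _ => le_max_left _ _)
        (fun x _ => by positivity)
        (by
          intro x hx y _
          rw [hgEpos x hx]
          refine le_trans (le_of_eq ?_) (le_max_right (y/K₁) (y/K₂))
          ring)
        (by
          intro x _
          rw [one_div, inv_mul_cancel₀ hK₂.ne']
          norm_num)
      refine le_trans haux (ENNReal.ofReal_le_ofReal ?_)
      have hgB : gE (B + K₃) = (B+K₃)/K₂ := hgEpos _ (by linarith)
      have e1 : (B+K₃)/K₂ = B/K₂ + K₃/K₂ := by ring
      have e2 : (B-ξ₀)/K₂ = B/K₂ - ξ₀/K₂ := by ring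
      rcases lt_or_ge ξ₀ 0 with hx0 | hx0
      · rw [hgB, hgEneg _ hx0, if_pos hx0]
        have e3 : ξ₀*(1/K₂-1/K₁) = ξ₀/K₂ - ξ₀/K₁ := by ring
        linarith
      · rw [hgB, hgEpos _ hx0, if_neg (not_lt.mpr hx0)]
        linarith
    · -- hard case: K₁ < K₂
      obtain ⟨lam, hlam⟩ : ∃ l : ℝ, l = 1/K₁ - 1/K₂ := ⟨_, rfl⟩
      have hlampos : 0 < lam := by
        rw [hlam, sub_pos]
        exact one_div_lt_one_div_of_lt hK₁ hc
      have hlamle : lam ≤ 1/K₁ := by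
        rw [hlam]
        nlinarith [one_div_pos.mpr hK₂]
      obtain ⟨α, hα⟩ : ∃ a : ℝ, a = K₂ / (2*K₃^2) := ⟨_, rfl⟩
      have hαpos : 0 < α := by rw [hα]; positivity
      have hαK : α * K₃^2 = K₂/2 := by rw [hα]; field_simp
      have hαK₃ : α * K₃ ≤ 1/2 := by
        rw [hα, div_mul_eq_mul_div, div_le_div_iff₀ (by positivity) (by norm_num)]
        nlinarith
      obtain ⟨gH, hgH⟩ : ∃ G : ℝ → ℝ, G = fun x => x/K₁ - lam * Ffun α (x - K₃) := ⟨_, rfl⟩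
      obtain ⟨sH, hsH⟩ : ∃ S : ℝ → ℝ, S = fun x => 1/K₁ - lam * Fder α (x - K₃) := ⟨_, rfl⟩
      obtain ⟨hh, hhh⟩ : ∃ H : ℝ → ℝ,
        H = fun x => lam * α * K₃^2 * Real.exp (-(α * max (x - 2*K₃) 0)) := ⟨_, rfl⟩
      obtain ⟨L, hL⟩ : ∃ l : ℝ, l = 2/K₁ + 2/K₂ + lam * α * K₃^2 + lam := ⟨_, rfl⟩
      have hlaK : 0 < lam * α * K₃^2 := mul_pos (mul_pos hlampos hαpos) (pow_pos hK₃ 2)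
      have hLpos : 0 < L := by
        rw [hL]
        have q2 : 0 < (2:ℝ)/K₁ := by positivity
        have q3 : 0 < (2:ℝ)/K₂ := by positivity
        linarith
      have hsHval : ∀ x, 1/K₂ ≤ sH x ∧ sH x ≤ 1/K₁ := by
        intro x
        have h1 := Fder_le_one (α := α) (x - K₃)
        have h0 := Fder_nonneg hαpos (x - K₃)
        have e : sH x = 1/K₁ - lam * Fder α (x - K₃) := by simp only [hsH]
        constructor <;> rw [e]
        · have h2 : lam * Fder α (x - K₃) ≤ lam := by nlinarith
          linarith [hlam.le, hlam.ge]
        · nlinarith [mul_nonneg hlampos.le h0]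
      have hmono : Monotone gH := by
        intro u v huv
        have eu : gH u = u/K₁ - lam * Ffun α (u - K₃) := by simp only [hgH]
        have ev : gH v = v/K₁ - lam * Ffun α (v - K₃) := by simp only [hgH]
        rw [eu, ev]
        have hch := Ffun_chord_upper hαpos (show u - K₃ ≤ v - K₃ by linarith)
        have hd1 := Fder_le_one (α := α) (v - K₃)
        have hd0 := Fder_nonneg hαpos (v - K₃)
        have e : (v - K₃) - (u - K₃) = v - u := by ring
        rw [e] at hch
        have h1 : lam * (Ffun α (v-K₃) - Ffun α (u-K₃)) ≤ lam * (Fder α (v-K₃) * (v-u)) :=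
          mul_le_mul_of_nonneg_left hch hlampos.le
        have h2 : Fder α (v-K₃) * (v-u) ≤ 1 * (v-u) :=
          mul_le_mul_of_nonneg_right hd1 (by linarith)
        have h3 : lam * (Fder α (v-K₃) * (v-u)) ≤ lam * (1 * (v-u)) :=
          mul_le_mul_of_nonneg_left h2 hlampos.le
        have h4 : (v-u) * lam ≤ (v-u) * (1/K₁) :=
          mul_le_mul_of_nonneg_left hlamle (by linarith)
        have e5 : (v-u) * (1/K₁) = v/K₁ - u/K₁ := by ring
        have r1 : lam*(Ffun α (v-K₃) - Ffun α (u-K₃))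
            = lam*Ffun α (v-K₃) - lam*Ffun α (u-K₃) := by ring
        have r2 : lam*(1*(v-u)) = (v-u)*lam := by ring
        linarith
      have hgneg : ∀ x, x ≤ K₃ → gH x = x / K₁ := by
        intro x hx
        have e : gH x = x/K₁ - lam * Ffun α (x - K₃) := by simp only [hgH]
        rw [e, Ffun_of_nonpos (show x - K₃ ≤ 0 by linarith)]
        ring
      have hgcont : Continuous gH := by
        simp only [hgH]
        exact (continuous_id.div_const K₁).sub
          (continuous_const.mul ((Ffun_continuous α).comp (continuous_id.sub continuous_const)))
      have hscont : Continuous sH := by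
        simp only [hsH]
        exact continuous_const.sub
          (continuous_const.mul ((Fder_continuous α).comp (continuous_id.sub continuous_const)))
      have hhcont : Continuous hh := by
        simp only [hhh]; fun_prop
      have hgLbd : ∀ x, |gH x| ≤ L * |x| := by
        intro x
        have e : gH x = x/K₁ - lam * Ffun α (x - K₃) := by simp only [hgH]
        rw [e]
        have hF0 := Ffun_nonneg hαpos (x - K₃)
        have hFle : Ffun α (x - K₃) ≤ |x| := by
          rcases le_or_gt (x - K₃) 0 with hx | hx
          · rw [Ffun_of_nonpos hx]; exact abs_nonneg x
          · refine le_trans (Ffun_le hαpos hx.le) ?_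
            linarith [le_abs_self x]
        have e1 : |x/K₁| = 1/K₁ * |x| := by
          rw [abs_div, abs_of_pos hK₁, div_eq_mul_one_div, mul_comm]
        have hr : |lam * Ffun α (x - K₃)| ≤ lam * |x| := by
          rw [abs_mul, abs_of_pos hlampos]
          exact mul_le_mul_of_nonneg_left
            (by rw [abs_of_nonneg hF0]; exact hFle) hlampos.le
        have hLL : 1/K₁ + lam ≤ L := by
          have q1 : 0 ≤ lam * α * K₃^2 := hlaK.le
          have q2 : 0 < (1:ℝ)/K₁ := by positivity
          have q3 : 0 < (1:ℝ)/K₂ := by positivity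
          have e2 : (2:ℝ)/K₁ = 1/K₁ + 1/K₁ := by ring
          have e4 : (2:ℝ)/K₂ = 1/K₂ + 1/K₂ := by ring
          rw [hL]
          linarith
        have hfin : (1/K₁ + lam) * |x| ≤ L * |x| :=
          mul_le_mul_of_nonneg_right hLL (abs_nonneg x)
        have efin : (1/K₁ + lam) * |x| = 1/K₁*|x| + lam*|x| := by ring
        calc |x/K₁ - lam * Ffun α (x - K₃)|
            ≤ |x/K₁| + |lam * Ffun α (x - K₃)| := abs_sub _ _
          _ ≤ 1/K₁*|x| + lam*|x| := by rw [e1]; linarith [hr]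
          _ ≤ L * |x| := by linarith
      have hsLbd : ∀ x, |sH x| ≤ L := by
        intro x
        obtain ⟨hl, hu⟩ := hsHval x
        have q3 : 0 < (1:ℝ)/K₂ := by positivity
        have h1 : 1/K₁ ≤ L := by
          have q1 : 0 ≤ lam * α * K₃^2 := hlaK.le
          have q2 : 0 < (1:ℝ)/K₁ := by positivity
          have e2 : (2:ℝ)/K₁ = 1/K₁ + 1/K₁ := by ring
          have q3' : 0 < (2:ℝ)/K₂ := by positivity
          rw [hL]
          linarith
        rw [abs_le]
        exact ⟨by linarith, by linarith⟩
      have hhLbd : ∀ x, |hh x| ≤ L := by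
        intro x
        have e : hh x = lam * α * K₃^2 * Real.exp (-(α * max (x - 2*K₃) 0)) := by
          simp only [hhh]
        rw [e, abs_of_nonneg (mul_nonneg hlaK.le (Real.exp_pos _).le)]
        have hexp : Real.exp (-(α * max (x - 2*K₃) 0)) ≤ 1 := by
          rw [Real.exp_le_one_iff]
          exact neg_nonpos.mpr (mul_nonneg hαpos.le (le_max_right _ _))
        have hbase : 0 ≤ lam * α * K₃^2 := hlaK.le
        have h1 : lam * α * K₃^2 * Real.exp (-(α * max (x - 2*K₃) 0)) ≤ lam * α * K₃^2 * 1 :=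
          mul_le_mul_of_nonneg_left hexp hbase
        have h2 : lam*α*K₃^2 ≤ L := by
          have q2 : 0 < (2:ℝ)/K₁ := by positivity
          have q3 : 0 < (2:ℝ)/K₂ := by positivity
          rw [hL]
          linarith
        linarith
      have hH4 : ∀ x, 0 ≤ x → 1 + hh x ≤ sH x * K₂ := by
        intro x hx
        have es : sH x = 1/K₁ - lam * Fder α (x - K₃) := by simp only [hsH]
        have eh : hh x = lam * α * K₃^2 * Real.exp (-(α * max (x - 2*K₃) 0)) := by
          simp only [hhh]
        rw [es, eh]
        have e3 := one_sub_Fder α (x - K₃)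
        have e5 : Fder α (x - K₃) = 1 - Real.exp (-(α * max (x - K₃) 0)) := by linarith
        have hQP : max (x - K₃) 0 ≤ max (x - 2*K₃) 0 + K₃ := by
          apply max_le
          · linarith [le_max_left (x - 2*K₃) (0:ℝ)]
          · linarith [le_max_right (x - 2*K₃) (0:ℝ)]
        have hexpQ : Real.exp (-(α * max (x - 2*K₃) 0)) * Real.exp (-(α*K₃))
            ≤ Real.exp (-(α * max (x - K₃) 0)) := by
          rw [← Real.exp_add]
          apply Real.exp_le_exp.mpr
          have hint := mul_le_mul_of_nonneg_left hQP hαpos.le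
          have r1 : α*(max (x - 2*K₃) 0 + K₃) = α*max (x - 2*K₃) 0 + α*K₃ := by ring
          linarith
        have hek2 : (1:ℝ)/2 ≤ Real.exp (-(α*K₃)) := by
          linarith [Real.add_one_le_exp (-(α*K₃))]
        have e4 : lam * α * K₃^2 = lam * (K₂/2) := by rw [mul_assoc, hαK]
        have hPexp : (0:ℝ) < Real.exp (-(α * max (x - 2*K₃) 0)) := Real.exp_pos _
        have key : lam*(K₂/2)*Real.exp (-(α * max (x - 2*K₃) 0))
            ≤ lam*K₂*Real.exp (-(α * max (x - K₃) 0)) := by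
          have t1 : Real.exp (-(α * max (x - 2*K₃) 0)) * (1/2)
              ≤ Real.exp (-(α * max (x - 2*K₃) 0)) * Real.exp (-(α*K₃)) :=
            mul_le_mul_of_nonneg_left hek2 hPexp.le
          have t2 : Real.exp (-(α * max (x - 2*K₃) 0)) * (1/2)
              ≤ Real.exp (-(α * max (x - K₃) 0)) := le_trans t1 hexpQ
          have t3 := mul_le_mul_of_nonneg_left t2 (mul_pos hlampos hK₂).le
          have r1 : lam*K₂*(Real.exp (-(α * max (x - 2*K₃) 0)) * (1/2))
              = lam*(K₂/2)*Real.exp (-(α * max (x - 2*K₃) 0)) := by ring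
          linarith
        have e6 : (1/K₁ - lam * Fder α (x - K₃)) * K₂
            = 1 + lam * K₂ * Real.exp (-(α * max (x - K₃) 0)) := by
          rw [e5, hlam]
          field_simp
          ring
        rw [e6, e4]
        linarith
      have hH3 : ∀ x, 0 ≤ x → ∀ y, |y - x| ≤ K₃ → gH x + sH x * (y - x) - hh x ≤ gH y := by
        intro x hx y hxy
        have ex : gH x = x/K₁ - lam * Ffun α (x - K₃) := by simp only [hgH]
        have ey : gH y = y/K₁ - lam * Ffun α (y - K₃) := by simp only [hgH]
        have es : sH x = 1/K₁ - lam * Fder α (x - K₃) := by simp only [hsH]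
        have eh : hh x = lam * α * K₃^2 * Real.exp (-(α * max (x - 2*K₃) 0)) := by
          simp only [hhh]
        rw [ex, ey, es, eh]
        have key := Ffun_taylor hαpos hK₃ (a := x - K₃) (b := y - K₃) (by
          have e : (y - K₃) - (x - K₃) = y - x := by ring
          rw [e]; exact hxy)
        have e7 : (x - K₃) - K₃ = x - 2*K₃ := by ring
        rw [e7] at key
        have key2 : lam * (Ffun α (y-K₃) - Ffun α (x-K₃) - Fder α (x-K₃) * ((y-K₃)-(x-K₃)))
            ≤ lam * (α*K₃^2*Real.exp (-(α * max (x-2*K₃) 0))) :=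
          mul_le_mul_of_nonneg_left key hlampos.le
        have e8 : (y-K₃)-(x-K₃) = y - x := by ring
        rw [e8] at key2
        have r1 : lam * (Ffun α (y-K₃) - Ffun α (x-K₃) - Fder α (x-K₃) * (y-x))
            = lam*Ffun α (y-K₃) - lam*Ffun α (x-K₃) - lam*(Fder α (x-K₃)*(y-x)) := by ring
        have r2 : (1/K₁ - lam*Fder α (x-K₃))*(y-x)
            = (y/K₁ - x/K₁) - lam*(Fder α (x-K₃)*(y-x)) := by ring
        have r3 : lam * (α*K₃^2*Real.exp (-(α * max (x-2*K₃) 0)))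
            = lam*α*K₃^2*Real.exp (-(α * max (x-2*K₃) 0)) := by ring
        linarith
      have haux := crossing_aux μ 𝓕 ξ hadapted hint ξ₀ hξ₀ K₁ K₂ K₃ hK₁ hK₂ hK₃
        hdrift hjump B hB hBle gH sH hh L hLpos.le hgcont hscont hhcont hgLbd hsLbd hhLbd
        hmono (fun x hx => hgneg x (by linarith)) (fun y hy => (hgneg y hy).ge)
        (fun x _ => le_trans (by positivity) (hsHval x).1) hH3 hH4
      have hgBK : gH (B+K₃) ≤ B/K₂ + K₃/K₁ + 2*lam*K₃^2/K₂ := by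
        have e : gH (B+K₃) = (B+K₃)/K₁ - lam * Ffun α B := by
          have e0 : gH (B+K₃) = (B+K₃)/K₁ - lam * Ffun α ((B+K₃) - K₃) := by simp only [hgH]
          rw [e0, show (B+K₃) - K₃ = B by ring]
        rw [e]
        have h1 : B - 1/α ≤ Ffun α B := Ffun_ge hαpos B
        have e2 : 1/α = 2*K₃^2/K₂ := by rw [hα]; field_simp
        rw [e2] at h1
        have h2 : lam * (B - 2*K₃^2/K₂) ≤ lam * Ffun α B :=
          mul_le_mul_of_nonneg_left h1 hlampos.le
        have e3 : (B+K₃)/K₁ - lam*(B - 2*K₃^2/K₂) = B/K₂ + K₃/K₁ + 2*lam*K₃^2/K₂ := by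
          rw [hlam]; field_simp; ring
        linarith
      have hgx : (if ξ₀ < 0 then ξ₀/K₁ else ξ₀/K₂) ≤ gH ξ₀ := by
        rcases lt_or_ge ξ₀ 0 with h | h
        · rw [if_pos h, hgneg ξ₀ (by linarith)]
        · rw [if_neg (not_lt.mpr h)]
          rcases le_or_gt ξ₀ K₃ with h2 | h2
          · rw [hgneg ξ₀ h2]
            exact div_le_div_of_nonneg_left h hK₁ hc.le
          · have e : gH ξ₀ = ξ₀/K₁ - lam * Ffun α (ξ₀ - K₃) := by simp only [hgH]
            rw [e]
            have h3 : Ffun α (ξ₀-K₃) ≤ ξ₀ - K₃ := Ffun_le hαpos (by linarith)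
            have h4 : lam * Ffun α (ξ₀-K₃) ≤ lam * ξ₀ :=
              mul_le_mul_of_nonneg_left (h3.trans (by linarith)) hlampos.le
            have e2 : ξ₀/K₂ = ξ₀/K₁ - lam*ξ₀ := by rw [hlam]; ring
            linarith
      refine le_trans haux (ENNReal.ofReal_le_ofReal ?_)
      have hrem : K₃/K₁ + 2*lam*K₃^2/K₂ ≤ 3*K₃^2/(K₁*K₂) := by
        have t1 : K₃/K₁ ≤ K₃^2/(K₁*K₂) := by
          rw [div_le_div_iff₀ hK₁ (by positivity)]
          have hint := mul_le_mul_of_nonneg_left hK₂₃ (mul_pos hK₃ hK₁).le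
          have r1 : K₃*(K₁*K₂) = K₃*K₁*K₂ := by ring
          have r2 : K₃^2*K₁ = K₃*K₁*K₃ := by ring
          linarith
        have t2 : 2*lam*K₃^2/K₂ ≤ 2*K₃^2/(K₁*K₂) := by
          rw [hlam, div_le_div_iff₀ hK₂ (by positivity)]
          have e : 2*(1/K₁-1/K₂)*K₃^2*(K₁*K₂) = 2*K₃^2*(K₂ - K₁) * (K₁*K₂) / (K₁*K₂) := by
            field_simp
          have e' : 2*(1/K₁-1/K₂)*K₃^2*(K₁*K₂) = 2*K₃^2*(K₂ - K₁) := by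
            field_simp
          rw [e']
          have r1 : 2*K₃^2*(K₂-K₁) = 2*K₃^2*K₂ - 2*K₃^2*K₁ := by ring
          have r2 : (0:ℝ) ≤ 2*K₃^2*K₁ := by positivity
          linarith
        have e3 : 3*K₃^2/(K₁*K₂) = K₃^2/(K₁*K₂) + 2*K₃^2/(K₁*K₂) := by ring
        linarith
      rcases lt_or_ge ξ₀ 0 with h | h
      · rw [if_pos h]
        have hgx' : ξ₀/K₁ ≤ gH ξ₀ := by rw [if_pos h] at hgx; exact hgx
        have e2 : (B-ξ₀)/K₂ = B/K₂ - ξ₀/K₂ := by ring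
        have e3 : ξ₀*(1/K₂-1/K₁) = ξ₀/K₂ - ξ₀/K₁ := by ring
        linarith
      · rw [if_neg (not_lt.mpr h)]
        have hgx' : ξ₀/K₂ ≤ gH ξ₀ := by rw [if_neg (not_lt.mpr h)] at hgx; exact hgx
        have e2 : (B-ξ₀)/K₂ = B/K₂ - ξ₀/K₂ := by ring
        linarith
  refine ⟨hbound, ?_⟩
  set NN : Set Ω := {ω | ∀ t, ξ t ω < B} with hNN
  have hNmeas : MeasurableSet NN := by
    have : NN = ⋂ t, {ω | ξ t ω < B} := by ext ω; simp [hNN]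
    rw [this]
    exact MeasurableSet.iInter fun t =>
      ((hadapted t).mono (𝓕.le t) le_rfl) measurableSet_Iio
  have hμN : μ NN = 0 := by
    by_contra hne
    have h2 : ∫⁻ ω in NN, (⨅ (t : ℕ) (_ : B ≤ ξ t ω), (t : ℝ≥0∞)) ∂μ = ⊤ := by
      rw [setLIntegral_congr_fun hNmeas (g := fun _ => (⊤:ℝ≥0∞))
        ?_]
      · rw [setLIntegral_const, ENNReal.top_mul hne]
      · intro ω hω
        have h1 : ∀ t : ℕ, (⨅ (_ : B ≤ ξ t ω), ((t:ℕ) : ℝ≥0∞)) = ⊤ :=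
          fun t => iInf_neg (not_le.mpr (hω t))
        simp only [h1, iInf_top]
    have h3 : (⊤ : ℝ≥0∞) ≤ ENNReal.ofReal
        ((B - ξ₀) / K₂ + (if ξ₀ < 0 then ξ₀ * (1 / K₂ - 1 / K₁) else 0)
          + 3 * K₃ ^ 2 / (K₁ * K₂)) := by
      rw [← h2]
      exact le_trans (setLIntegral_le_lintegral _ _) hbound
    exact absurd (lt_of_le_of_lt h3 ENNReal.ofReal_lt_top) (lt_irrefl _)
  rw [ae_iff]
  have heq : {ω | ¬ ∃ t : ℕ, B ≤ ξ t ω} = NN := by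
    ext ω
    simp [hNN, not_le]
  rw [heq]
  exact hμN
end

section
/- Let (ξ(t))_{t∈ℕ} be an integrable real-valued process adapted to a filtration (F_t)_{t∈ℕ}, and let K₁, K₂, K₃ > 0 with K₁ ≤ K₃ and K₂ ≤ K₃ be constants such that almost surely, for every t: E[ξ(t+1) | F_t] ≥ ξ(t) + K₁ on {ξ(t) < 0}; E[ξ(t+1) | F_t] ≥ ξ(t) + K₂ on {ξ(t) ≥ 0}; and |ξ(t+1) − ξ(t)| ≤ K₃ on {max(ξ(t), ξ(t+1)) ≥ 0}. Set A := max{0, (3K₃²/K₂)·(1/K₁ − 1/K₂)} and α := K₂/(2K₃²), and define the process η(t) := −A + ξ(t)/K₁ − t when ξ(t) < 0, and η(t) := −A·exp(−α·ξ(t)) + ξ(t)/K₂ − t when ξ(t) ≥ 0. Then (η(t))_{t∈ℕ} is a submartingale with respect to (F_t), i.e., E[η(t+1) | F_t] ≥ η(t) almost surely for every t. -/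
open MeasureTheory

private lemma exp_quad_aux {y : ℝ} (hy : |y| ≤ 1) : Real.exp y ≤ 1 + y + y ^ 2 := by
  have h := Real.exp_bound hy (n := 2) (by norm_num)
  have hs : ∑ m ∈ Finset.range 2, y ^ m / m.factorial = 1 + y := by
    simp [Finset.sum_range_succ]
  rw [hs] at h
  have h2 : Real.exp y - (1 + y) ≤ |y| ^ 2 * ((2:ℕ).succ / ((2:ℕ).factorial * 2)) :=
    (abs_sub_le_iff.1 h).1
  have : ((2:ℕ).succ : ℝ) / ((2:ℕ).factorial * 2) = 3 / 4 := by norm_num [Nat.factorial]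
  rw [this, sq_abs] at h2
  nlinarith [sq_nonneg y]

private lemma exp_neg_le_inv_aux {y : ℝ} (hy : 0 ≤ y) : Real.exp (-y) ≤ 1 / (1 + y) := by
  have h1 : 1 + y ≤ Real.exp y := by linarith [Real.add_one_le_exp y]
  have h2 : (0:ℝ) < 1 + y := by linarith
  rw [Real.exp_neg, one_div]
  exact inv_anti₀ h2 h1

private lemma minor1_aux {K₁ K₂ K₃ A α x : ℝ} (hK₁ : 0 < K₁) (hK₂ : 0 < K₂) (hK₃ : 0 < K₃)
    (hK₂₃ : K₂ ≤ K₃)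
    (hA : A = max 0 ((3 * K₃ ^ 2 / K₂) * (1 / K₁ - 1 / K₂)))
    (hα : α = K₂ / (2 * K₃ ^ 2)) (hx : x ≤ K₃) :
    -A + x / K₁ ≤ if x < 0 then -A + x / K₁ else -A * Real.exp (-α * x) + x / K₂ := by
  split_ifs with h
  · exact le_refl _
  push_neg at h
  have hα0 : 0 < α := by rw [hα]; positivity
  have hαx : 0 ≤ α * x := mul_nonneg hα0.le h
  have hαx2 : α * x ≤ 1 / 2 := by
    have hxk : α * x ≤ α * K₃ := by nlinarith
    have hK : α * K₃ * (2 * K₃) = K₂ := by rw [hα]; field_simp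
    nlinarith [hxk, hK]
  have he : Real.exp (-(α * x)) ≤ 1 / (1 + α * x) := exp_neg_le_inv_aux hαx
  have hpos : (0:ℝ) < 1 + α * x := by linarith
  have h1 : (2/3) * (α * x) ≤ 1 - Real.exp (-(α * x)) := by
    have h2 : (2/3) * (α * x) ≤ 1 - 1 / (1 + α * x) := by
      have heq : 1 - 1 / (1 + α * x) = (α * x) / (1 + α * x) := by field_simp; ring
      rw [heq, le_div_iff₀ hpos]
      nlinarith [mul_nonneg hαx (by linarith : (0:ℝ) ≤ 1 - 2 * (α * x))]
    linarith
  have hA0 : 0 ≤ A := by rw [hA]; exact le_max_left _ _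
  have hD : x / K₁ - x / K₂ = x * (1 / K₁ - 1 / K₂) := by field_simp
  rcases le_or_gt (1 / K₁ - 1 / K₂) 0 with hDle | hDpos
  · have hxe : Real.exp (-(α * x)) ≤ 1 := by
      rw [← Real.exp_zero]; exact Real.exp_le_exp.2 (by linarith)
    have : -α * x = -(α * x) := by ring
    rw [this]
    nlinarith [mul_nonpos_of_nonneg_of_nonpos h hDle,
      mul_nonneg hA0 (by linarith : (0:ℝ) ≤ 1 - Real.exp (-(α * x)))]
  · have hAval : A = 3 * K₃ ^ 2 / K₂ * (1 / K₁ - 1 / K₂) := by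
      rw [hA]; exact max_eq_right (by positivity)
    have hAα : A * α = 3 / 2 * (1 / K₁ - 1 / K₂) := by
      rw [hAval, hα]; field_simp
    have key : x * (1 / K₁ - 1 / K₂) ≤ A * (1 - Real.exp (-(α * x))) := by
      have c1 : A * ((2/3) * (α * x)) ≤ A * (1 - Real.exp (-(α * x))) :=
        mul_le_mul_of_nonneg_left h1 hA0
      have c2 : A * ((2/3) * (α * x)) = x * (1 / K₁ - 1 / K₂) := by
        linear_combination (2/3) * x * hAα
      linarith
    have : -α * x = -(α * x) := by ring
    rw [this]
    nlinarith [key, hD]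

private lemma minor2_aux {K₁ K₂ K₃ A α x : ℝ} (hK₁ : 0 < K₁) (hK₂ : 0 < K₂) (hK₃ : 0 < K₃)
    (hA : A = max 0 ((3 * K₃ ^ 2 / K₂) * (1 / K₁ - 1 / K₂)))
    (hα : α = K₂ / (2 * K₃ ^ 2)) (hx : -K₃ ≤ x) :
    -A * Real.exp (-α * x) + x / K₂ ≤
      if x < 0 then -A + x / K₁ else -A * Real.exp (-α * x) + x / K₂ := by
  split_ifs with h
  swap
  · exact le_refl _
  have hα0 : 0 < α := by rw [hα]; positivity
  have hA0 : 0 ≤ A := by rw [hA]; exact le_max_left _ _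
  have hexp : 1 + (-α * x) ≤ Real.exp (-α * x) := by linarith [Real.add_one_le_exp (-α * x)]
  have hxneg : 0 < -x := by linarith
  have hD : x / K₂ - x / K₁ = (-x) * (1 / K₁ - 1 / K₂) := by field_simp; ring
  rcases le_or_gt (1 / K₁ - 1 / K₂) 0 with hDle | hDpos
  · have h1 : (-x) * (1 / K₁ - 1 / K₂) ≤ 0 := mul_nonpos_of_nonneg_of_nonpos hxneg.le hDle
    have h2 : 0 ≤ A * (Real.exp (-α * x) - 1) := by
      apply mul_nonneg hA0; nlinarith
    nlinarith [hD]
  · have hAval : A = 3 * K₃ ^ 2 / K₂ * (1 / K₁ - 1 / K₂) := by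
      rw [hA]; exact max_eq_right (by positivity)
    have hAα : A * α = 3 / 2 * (1 / K₁ - 1 / K₂) := by
      rw [hAval, hα]; field_simp
    have key : (-x) * (1 / K₁ - 1 / K₂) ≤ A * (Real.exp (-α * x) - 1) := by
      have c1 : A * (-α * x) ≤ A * (Real.exp (-α * x) - 1) :=
        mul_le_mul_of_nonneg_left (by linarith) hA0
      nlinarith [hAα, c1]
    nlinarith [hD, key]

private lemma condexp_affine_aux {Ω : Type*} {mΩ m : MeasurableSpace Ω} (hm : m ≤ mΩ)
    (μ : @Measure Ω mΩ) [IsFiniteMeasure μ] {Y : Ω → ℝ} (hY : Integrable Y μ) (a c : ℝ) :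
    (μ[fun ω => a * Y ω + c|m]) =ᵐ[μ] fun ω => a * (μ[Y|m]) ω + c := by
  have h1 : (μ[fun ω => a * Y ω + c|m])
      =ᵐ[μ] μ[fun ω => a * Y ω|m] + μ[fun _ => c|m] :=
    condExp_add (hY.const_mul a) (integrable_const c) m
  have h2 : (μ[fun ω => a * Y ω|m]) =ᵐ[μ] fun ω => a * (μ[Y|m]) ω := by
    have := condExp_smul (m := m) (μ := μ) (𝕜 := ℝ) a Y
    exact this
  have h3 : μ[fun _ : Ω => c|m] = fun _ => c := condExp_const hm c
  filter_upwards [h1, h2] with ω e1 e2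
  simp only [e1, Pi.add_apply, e2, h3]

private lemma condexp_comb_aux {Ω : Type*} {mΩ m : MeasurableSpace Ω} (hm : m ≤ mΩ)
    (μ : @Measure Ω mΩ) [IsFiniteMeasure μ] {W Y : Ω → ℝ}
    (hW : Integrable W μ) (hY : Integrable Y μ) (a b c : ℝ) :
    (μ[fun ω => a * W ω + b * Y ω + c|m])
      =ᵐ[μ] fun ω => a * (μ[W|m]) ω + b * (μ[Y|m]) ω + c := by
  have h1 : (μ[fun ω => a * W ω + b * Y ω + c|m])
      =ᵐ[μ] μ[fun ω => a * W ω + b * Y ω|m] + μ[fun _ => c|m] :=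
    condExp_add ((hW.const_mul a).add (hY.const_mul b)) (integrable_const c) m
  have h2 : (μ[fun ω => a * W ω + b * Y ω|m])
      =ᵐ[μ] μ[fun ω => a * W ω|m] + μ[fun ω => b * Y ω|m] :=
    condExp_add (hW.const_mul a) (hY.const_mul b) m
  have h3 : (μ[fun ω => a * W ω|m]) =ᵐ[μ] fun ω => a * (μ[W|m]) ω := by
    have := condExp_smul (m := m) (μ := μ) (𝕜 := ℝ) a W
    exact this
  have h4 : (μ[fun ω => b * Y ω|m]) =ᵐ[μ] fun ω => b * (μ[Y|m]) ω := by
    have := condExp_smul (m := m) (μ := μ) (𝕜 := ℝ) b Y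
    exact this
  have h5 : μ[fun _ : Ω => c|m] = fun _ => c := condExp_const hm c
  filter_upwards [h1, h2, h3, h4] with ω e1 e2 e3 e4
  simp only [e1, Pi.add_apply, e2, e3, e4, h5]

set_option maxHeartbeats 2000000 in
/-- Claim 1: the auxiliary process
`η(t) = −A + ξ(t)/K₁ − t` when `ξ(t) < 0`, and
`η(t) = −A·exp(−α·ξ(t)) + ξ(t)/K₂ − t` when `ξ(t) ≥ 0`,
with `A = max{0, (3K₃²/K₂)(1/K₁ − 1/K₂)}` and `α = K₂/(2K₃²)`,
is a submartingale: `E[η(t+1)|F_t] ≥ η(t)` a.s. for every `t`. -/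
theorem eta_is_submartingale
    {Ω : Type*} {mΩ : MeasurableSpace Ω} (μ : Measure Ω) [IsProbabilityMeasure μ]
    (𝓕 : Filtration ℕ mΩ)
    (ξ : ℕ → Ω → ℝ)
    (hadapted : ∀ t, Measurable[𝓕 t] (ξ t))
    (hint : ∀ t, Integrable (ξ t) μ)
    (K₁ K₂ K₃ : ℝ) (hK₁ : 0 < K₁) (hK₂ : 0 < K₂) (hK₃ : 0 < K₃)
    (hK₁₃ : K₁ ≤ K₃) (hK₂₃ : K₂ ≤ K₃)
    (hdrift : ∀ t : ℕ, ∀ᵐ ω ∂μ,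
      (ξ t ω < 0 → ξ t ω + K₁ ≤ (μ[ξ (t + 1)|𝓕 t]) ω) ∧
      (0 ≤ ξ t ω → ξ t ω + K₂ ≤ (μ[ξ (t + 1)|𝓕 t]) ω))
    (hjump : ∀ t : ℕ, ∀ᵐ ω ∂μ,
      0 ≤ max (ξ t ω) (ξ (t + 1) ω) → |ξ (t + 1) ω - ξ t ω| ≤ K₃)
    (A α : ℝ)
    (hA : A = max 0 ((3 * K₃ ^ 2 / K₂) * (1 / K₁ - 1 / K₂)))
    (hα : α = K₂ / (2 * K₃ ^ 2))
    (η : ℕ → Ω → ℝ)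
    (hη : ∀ t ω, η t ω =
      if ξ t ω < 0 then -A + ξ t ω / K₁ - t
      else -A * Real.exp (-α * ξ t ω) + ξ t ω / K₂ - t) :
    ∀ t : ℕ, ∀ᵐ ω ∂μ, η t ω ≤ (μ[η (t + 1)|𝓕 t]) ω := by
  intro t
  have hm : 𝓕 t ≤ mΩ := 𝓕.le t
  have hXm : Measurable[𝓕 t] (ξ t) := hadapted t
  have hXmeas : Measurable (ξ t) := hXm.mono hm le_rfl
  have hYmeas : Measurable (ξ (t+1)) := (hadapted (t+1)).mono (𝓕.le (t+1)) le_rfl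
  have hYint := hint (t+1)
  have hα0 : 0 < α := by rw [hα]; positivity
  have hA0 : 0 ≤ A := by rw [hA]; exact le_max_left _ _
  have hαK3 : α * K₃ ≤ 1 / 2 := by
    have hK : α * K₃ * (2 * K₃) = K₂ := by rw [hα]; field_simp
    nlinarith [hK]
  have hαK2 : α ^ 2 * K₃ ^ 2 = α * K₂ / 2 := by rw [hα]; field_simp
  set c : ℝ := Real.exp (α * K₃) with hcdef
  set χ : Ω → ℝ := fun ω => if ξ t ω < 0 then 0 else 1 with hχdef
  set w : Ω → ℝ := fun ω => min (Real.exp (-α * ξ (t+1) ω)) c with hwdef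
  set u : Ω → ℝ := fun ω => K₁⁻¹ * ξ (t+1) ω + (-A - ((t:ℝ)+1)) with hudef
  set v : Ω → ℝ := fun ω => -A * w ω + K₂⁻¹ * ξ (t+1) ω + (-((t:ℝ)+1)) with hvdef
  set ζ : Ω → ℝ := fun ω => if ξ t ω < 0 then u ω else v ω with hζdef
  -- measurability and integrability
  have hχm : Measurable[𝓕 t] χ :=
    Measurable.ite (measurableSet_lt hXm measurable_const) measurable_const measurable_const
  have hχ1 : ∀ ω, ‖χ ω‖ ≤ 1 := by
    intro ω; rw [hχdef]; dsimp only; split_ifs <;> simp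
  have hwmeas : Measurable w := (hYmeas.const_mul (-α)).exp.min measurable_const
  have hwpos : ∀ ω, 0 < w ω := fun ω => lt_min (Real.exp_pos _) (Real.exp_pos _)
  have hwint : Integrable w μ := by
    refine Integrable.mono' (integrable_const c) hwmeas.aestronglyMeasurable ?_
    filter_upwards with ω
    rw [Real.norm_eq_abs, abs_of_pos (hwpos ω)]
    exact min_le_right _ _
  have huint : Integrable u μ := (hYint.const_mul K₁⁻¹).add (integrable_const _)
  have hvint : Integrable v μ :=
    ((hwint.const_mul (-A)).add (hYint.const_mul K₂⁻¹)).add (integrable_const _)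
  have hvu_int : Integrable (fun ω => v ω - u ω) μ := hvint.sub huint
  have hζdecomp : ζ = fun ω => u ω + χ ω * (v ω - u ω) := by
    funext ω
    rw [hζdef, hχdef]; dsimp only
    split_ifs <;> ring
  have hprod_int : Integrable (fun ω => χ ω * (v ω - u ω)) μ :=
    hvu_int.bdd_mul ((hχm.mono hm le_rfl).aestronglyMeasurable)
      (Filter.Eventually.of_forall hχ1)
  have hζint : Integrable ζ μ := by
    rw [hζdecomp]; exact huint.add hprod_int
  -- the function form of η (t+1)
  have hη1 : η (t+1) = fun ω =>
      if ξ (t+1) ω < 0 then -A + ξ (t+1) ω / K₁ - ((t:ℝ)+1)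
      else -A * Real.exp (-α * ξ (t+1) ω) + ξ (t+1) ω / K₂ - ((t:ℝ)+1) := by
    funext ω
    rw [hη (t+1) ω]
    push_cast
    rfl
  have hηmeas : AEStronglyMeasurable (η (t+1)) μ := by
    rw [hη1]
    exact (Measurable.ite (measurableSet_lt hYmeas measurable_const)
      (by fun_prop) (by fun_prop)).aestronglyMeasurable
  have hηint : Integrable (η (t+1)) μ := by
    refine Integrable.mono'
      (g := fun ω => A + |ξ (t+1) ω| / K₁ + |ξ (t+1) ω| / K₂ + ((t:ℝ)+1))
      ((((integrable_const A).add (hYint.abs.div_const K₁)).add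
        (hYint.abs.div_const K₂)).add (integrable_const _)) hηmeas ?_
    filter_upwards with ω
    rw [hη1]; dsimp only
    have habs := abs_nonneg (ξ (t+1) ω)
    have h1 : ξ (t+1) ω / K₁ ≤ |ξ (t+1) ω| / K₁ := by gcongr; exact le_abs_self _
    have h1' : -(|ξ (t+1) ω| / K₁) ≤ ξ (t+1) ω / K₁ := by
      rw [← neg_div]; gcongr; exact neg_abs_le _
    have h2 : ξ (t+1) ω / K₂ ≤ |ξ (t+1) ω| / K₂ := by gcongr; exact le_abs_self _
    have h2' : -(|ξ (t+1) ω| / K₂) ≤ ξ (t+1) ω / K₂ := by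
      rw [← neg_div]; gcongr; exact neg_abs_le _
    have hd1 : 0 ≤ |ξ (t+1) ω| / K₁ := by positivity
    have hd2 : 0 ≤ |ξ (t+1) ω| / K₂ := by positivity
    have ht0 : (0:ℝ) ≤ (t:ℝ) + 1 := by positivity
    rw [Real.norm_eq_abs]
    split_ifs with hc
    · rw [abs_le]
      constructor <;> linarith
    · push_neg at hc
      have he1 : Real.exp (-α * ξ (t+1) ω) ≤ 1 := by
        rw [← Real.exp_zero]
        exact Real.exp_le_exp.2 (by nlinarith)
      have he0 : 0 ≤ Real.exp (-α * ξ (t+1) ω) := (Real.exp_pos _).le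
      rw [abs_le]
      constructor <;> nlinarith [mul_nonneg hA0 he0, mul_le_mul_of_nonneg_left he1 hA0]
  -- ζ ≤ η(t+1) a.e.
  have hζ_le : ζ ≤ᵐ[μ] η (t+1) := by
    filter_upwards [hjump t] with ω hj
    rw [hη1, hζdef]; dsimp only
    by_cases hx : ξ t ω < 0
    · rw [if_pos hx]
      have hY3 : ξ (t+1) ω ≤ K₃ := by
        by_cases hy : ξ (t+1) ω < 0
        · linarith
        · have h := abs_le.1 (hj (le_max_of_le_right (not_lt.1 hy)))
          linarith [h.2]
      have hmin := minor1_aux hK₁ hK₂ hK₃ hK₂₃ hA hα hY3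
      have hid : K₁⁻¹ * ξ (t+1) ω = ξ (t+1) ω / K₁ := by rw [inv_mul_eq_div]
      rw [hudef]; dsimp only
      split_ifs at hmin ⊢ <;> linarith
    · rw [if_neg hx]
      have hX0' : 0 ≤ ξ t ω := not_lt.1 hx
      have hjj := abs_le.1 (hj (le_max_of_le_left hX0'))
      have hY3 : -K₃ ≤ ξ (t+1) ω := by linarith [hjj.1]
      have hwω : w ω = Real.exp (-α * ξ (t+1) ω) := by
        rw [hwdef]; dsimp only
        exact min_eq_left (Real.exp_le_exp.2 (by nlinarith))
      have hmin := minor2_aux hK₁ hK₂ hK₃ hA hα hY3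
      have hid : K₂⁻¹ * ξ (t+1) ω = ξ (t+1) ω / K₂ := by rw [inv_mul_eq_div]
      rw [hvdef]; dsimp only
      rw [hwω]
      split_ifs at hmin ⊢ <;> linarith
  -- conditional expectation computations
  have hu_ce : (μ[u|𝓕 t]) =ᵐ[μ]
      fun ω => K₁⁻¹ * (μ[ξ (t+1)|𝓕 t]) ω + (-A - ((t:ℝ)+1)) := by
    rw [hudef]; exact condexp_affine_aux hm μ hYint _ _
  have hv_ce : (μ[v|𝓕 t]) =ᵐ[μ]
      fun ω => -A * (μ[w|𝓕 t]) ω + K₂⁻¹ * (μ[ξ (t+1)|𝓕 t]) ω + (-((t:ℝ)+1)) := by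
    rw [hvdef]; exact condexp_comb_aux hm μ hwint hYint _ _ _
  have hζ_ce : (μ[ζ|𝓕 t]) =ᵐ[μ]
      fun ω => (μ[u|𝓕 t]) ω + χ ω * ((μ[v|𝓕 t]) ω - (μ[u|𝓕 t]) ω) := by
    rw [hζdecomp]
    have h1 : (μ[fun ω => u ω + χ ω * (v ω - u ω)|𝓕 t]) =ᵐ[μ]
        μ[u|𝓕 t] + μ[fun ω => χ ω * (v ω - u ω)|𝓕 t] :=
      condExp_add huint hprod_int _
    have h2 : (μ[fun ω => χ ω * (v ω - u ω)|𝓕 t]) =ᵐ[μ]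
        fun ω => χ ω * (μ[fun ω => v ω - u ω|𝓕 t]) ω := by
      have := condExp_mul_of_stronglyMeasurable_left hχm.stronglyMeasurable hprod_int hvu_int
      exact this
    have h3 : (μ[fun ω => v ω - u ω|𝓕 t]) =ᵐ[μ] μ[v|𝓕 t] - μ[u|𝓕 t] :=
      condExp_sub hvint huint _
    filter_upwards [h1, h2, h3] with ω e1 e2 e3
    rw [e1, Pi.add_apply, e2, e3, Pi.sub_apply]
  -- the exponential-moment bound
  set φ : Ω → ℝ := fun ω => χ ω * Real.exp (-α * ξ t ω) with hφdef
  set q : Ω → ℝ := fun ω => φ ω * (1 + α^2 * K₃^2 + α * ξ t ω) with hqdef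
  set p : Ω → ℝ := fun ω => α * φ ω with hpdef
  have hφm : Measurable[𝓕 t] φ := hχm.mul ((hXm.const_mul (-α)).exp)
  have hφ01 : ∀ ω, 0 ≤ φ ω ∧ φ ω ≤ 1 := by
    intro ω
    rw [hφdef, hχdef]; dsimp only
    split_ifs with hx
    · simp
    · push_neg at hx
      constructor
      · positivity
      · rw [one_mul, ← Real.exp_zero]
        exact Real.exp_le_exp.2 (by nlinarith)
  have hφX : ∀ ω, φ ω * (α * ξ t ω) ≤ 1 := by
    intro ω
    rw [hφdef, hχdef]; dsimp only
    split_ifs with hx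
    · simp
    · push_neg at hx
      rw [one_mul]
      have h1 := Real.add_one_le_exp (α * ξ t ω)
      have h2 : Real.exp (-α * ξ t ω) * Real.exp (α * ξ t ω) = 1 := by
        rw [← Real.exp_add]; ring_nf; exact Real.exp_zero
      nlinarith [Real.exp_pos (-α * ξ t ω), mul_nonneg hα0.le hx]
  have hφXnn : ∀ ω, 0 ≤ φ ω * (α * ξ t ω) := by
    intro ω
    rw [hφdef, hχdef]; dsimp only
    split_ifs with hx
    · simp
    · push_neg at hx
      positivity
  have hqm : Measurable[𝓕 t] q :=
    hφm.mul ((hXm.const_mul α).const_add _)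
  have hq_bdd : ∀ ω, ‖q ω‖ ≤ 2 + α^2 * K₃^2 := by
    intro ω
    have h0 := (hφ01 ω).1
    have h1 := (hφ01 ω).2
    have h2 := hφX ω
    have h3 := hφXnn ω
    rw [hqdef]; dsimp only
    rw [Real.norm_eq_abs, abs_le]
    constructor <;> nlinarith [sq_nonneg α, sq_nonneg K₃,
      mul_nonneg (mul_nonneg (sq_nonneg α) (sq_nonneg K₃)) h0,
      mul_le_mul_of_nonneg_left h1 (mul_nonneg (sq_nonneg α) (sq_nonneg K₃)) ]
  have hq_int : Integrable q μ := by
    refine Integrable.mono' (integrable_const (2 + α^2 * K₃^2))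
      ((hqm.mono hm le_rfl).aestronglyMeasurable) ?_
    filter_upwards with ω using hq_bdd ω
  have hpm : Measurable[𝓕 t] p := hφm.const_mul α
  have hp_bdd : ∀ ω, ‖p ω‖ ≤ α := by
    intro ω
    have h0 := (hφ01 ω).1
    have h1 := (hφ01 ω).2
    rw [hpdef]; dsimp only
    rw [Real.norm_eq_abs, abs_le]
    constructor <;> nlinarith
  have hpY_int : Integrable (fun ω => p ω * ξ (t+1) ω) μ :=
    hYint.bdd_mul ((hpm.mono hm le_rfl).aestronglyMeasurable)
      (Filter.Eventually.of_forall hp_bdd)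
  have hχw_int : Integrable (fun ω => χ ω * w ω) μ :=
    hwint.bdd_mul ((hχm.mono hm le_rfl).aestronglyMeasurable)
      (Filter.Eventually.of_forall hχ1)
  have hqp_int : Integrable (fun ω => q ω - p ω * ξ (t+1) ω) μ := hq_int.sub hpY_int
  have hkey_pt : (fun ω => χ ω * w ω) ≤ᵐ[μ] fun ω => q ω - p ω * ξ (t+1) ω := by
    filter_upwards [hjump t] with ω hj
    by_cases hx : ξ t ω < 0
    · have hχ0 : χ ω = 0 := by rw [hχdef]; dsimp only; rw [if_pos hx]
      have hφ0 : φ ω = 0 := by simp only [hφdef]; rw [hχ0, zero_mul]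
      rw [hχ0, hqdef, hpdef]; dsimp only
      rw [hφ0]; ring_nf; exact le_refl _
    · have hX0' : 0 ≤ ξ t ω := not_lt.1 hx
      have hχ1' : χ ω = 1 := by rw [hχdef]; dsimp only; rw [if_neg hx]
      have hφ1 : φ ω = Real.exp (-α * ξ t ω) := by simp only [hφdef]; rw [hχ1', one_mul]
      have hd := abs_le.1 (hj (le_max_of_le_left hX0'))
      have hdd : (ξ (t+1) ω - ξ t ω)^2 ≤ K₃^2 := by nlinarith [hd.1, hd.2]
      have habs1 : |(-α) * (ξ (t+1) ω - ξ t ω)| ≤ 1 := by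
        rw [abs_mul, abs_neg, abs_of_pos hα0]
        have : α * |ξ (t+1) ω - ξ t ω| ≤ α * K₃ := by
          apply mul_le_mul_of_nonneg_left _ hα0.le
          exact abs_le.2 ⟨hd.1, hd.2⟩
        linarith
      have h3 := exp_quad_aux habs1
      have h5 : Real.exp (-α * ξ (t+1) ω) ≤
          Real.exp (-α * ξ t ω) * (1 + α^2 * K₃^2 - α * (ξ (t+1) ω - ξ t ω)) := by
        have h2 : Real.exp (-α * ξ (t+1) ω) =
            Real.exp (-α * ξ t ω) * Real.exp ((-α) * (ξ (t+1) ω - ξ t ω)) := by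
          rw [← Real.exp_add]; ring_nf
        rw [h2]
        apply mul_le_mul_of_nonneg_left _ (Real.exp_pos _).le
        have h4 : ((-α) * (ξ (t+1) ω - ξ t ω))^2 ≤ α^2 * K₃^2 := by nlinarith [hdd]
        nlinarith [h3, h4]
      have h1 : w ω ≤ Real.exp (-α * ξ (t+1) ω) := by
        rw [hwdef]; dsimp only; exact min_le_left _ _
      rw [hχ1', hqdef, hpdef]; dsimp only
      rw [hφ1, one_mul]
      nlinarith [h1, h5]
  have hkey_ce := condExp_mono (m := 𝓕 t) hχw_int hqp_int hkey_pt
  have hcw_ce : (μ[fun ω => χ ω * w ω|𝓕 t]) =ᵐ[μ] fun ω => χ ω * (μ[w|𝓕 t]) ω :=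
    condExp_mul_of_stronglyMeasurable_left hχm.stronglyMeasurable hχw_int hwint
  haveI : SigmaFinite (μ.trim hm) := by
    infer_instance
  have hq_ce : (μ[q|𝓕 t]) = q :=
    condExp_of_stronglyMeasurable hm hqm.stronglyMeasurable hq_int
  have hpY_ce : (μ[fun ω => p ω * ξ (t+1) ω|𝓕 t]) =ᵐ[μ]
      fun ω => p ω * (μ[ξ (t+1)|𝓕 t]) ω :=
    condExp_mul_of_stronglyMeasurable_left hpm.stronglyMeasurable hpY_int hYint
  have hqp_ce : (μ[fun ω => q ω - p ω * ξ (t+1) ω|𝓕 t]) =ᵐ[μ]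
      fun ω => q ω - p ω * (μ[ξ (t+1)|𝓕 t]) ω := by
    have h1 : (μ[fun ω => q ω - p ω * ξ (t+1) ω|𝓕 t]) =ᵐ[μ]
        μ[q|𝓕 t] - μ[fun ω => p ω * ξ (t+1) ω|𝓕 t] := condExp_sub hq_int hpY_int _
    filter_upwards [h1, hpY_ce] with ω e1 e2
    rw [e1, Pi.sub_apply, e2, hq_ce]
  -- final assembly
  have hmono := condExp_mono (m := 𝓕 t) hζint hηint hζ_le
  filter_upwards [hdrift t, hmono, hζ_ce, hu_ce, hv_ce, hcw_ce, hqp_ce, hkey_ce]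
    with ω hdω hmω hζω huω hvω hcwω hqpω hkω
  rw [hη t ω]
  by_cases hx : ξ t ω < 0
  · rw [if_pos hx]
    have hχ0 : χ ω = 0 := by rw [hχdef]; dsimp only; rw [if_pos hx]
    have e1 : (μ[ζ|𝓕 t]) ω = (μ[u|𝓕 t]) ω := by rw [hζω, hχ0]; ring
    have hd1 : ξ t ω + K₁ ≤ (μ[ξ (t+1)|𝓕 t]) ω := hdω.1 hx
    have hmul : K₁⁻¹ * (ξ t ω + K₁) ≤ K₁⁻¹ * (μ[ξ (t+1)|𝓕 t]) ω :=
      mul_le_mul_of_nonneg_left hd1 (by positivity)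
    have hid : K₁⁻¹ * (ξ t ω + K₁) = ξ t ω / K₁ + 1 := by field_simp
    have e2 : (μ[u|𝓕 t]) ω = K₁⁻¹ * (μ[ξ (t+1)|𝓕 t]) ω + (-A - ((t:ℝ)+1)) := huω
    rw [e1, e2] at hmω
    linarith [hmω]
  · rw [if_neg hx]
    have hX0' : 0 ≤ ξ t ω := not_lt.1 hx
    have hχ1' : χ ω = 1 := by rw [hχdef]; dsimp only; rw [if_neg hx]
    have hφ1 : φ ω = Real.exp (-α * ξ t ω) := by simp only [hφdef]; rw [hχ1', one_mul]
    have e1 : (μ[ζ|𝓕 t]) ω = (μ[v|𝓕 t]) ω := by rw [hζω, hχ1']; ring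
    have hd2 : ξ t ω + K₂ ≤ (μ[ξ (t+1)|𝓕 t]) ω := hdω.2 hX0'
    have hE := Real.exp_pos (-α * ξ t ω)
    -- bound on μ[w|𝓕 t] ω
    have hwb : χ ω * (μ[w|𝓕 t]) ω ≤ q ω - p ω * (μ[ξ (t+1)|𝓕 t]) ω := by
      rw [← hcwω, ← hqpω]; exact hkω
    rw [hχ1', one_mul, hqdef, hpdef] at hwb; dsimp only at hwb
    rw [hφ1] at hwb
    have hstep1 : α * Real.exp (-α * ξ t ω) * (ξ t ω + K₂) ≤
        α * Real.exp (-α * ξ t ω) * (μ[ξ (t+1)|𝓕 t]) ω :=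
      mul_le_mul_of_nonneg_left hd2 (by positivity)
    have hwb2 : (μ[w|𝓕 t]) ω ≤ Real.exp (-α * ξ t ω) * (1 - α * K₂ / 2) := by
      nlinarith [hwb, hstep1, hαK2, hE.le,
        mul_le_mul_of_nonneg_left (le_of_eq hαK2) hE.le]
    have hAmul : A * (μ[w|𝓕 t]) ω ≤ A * (Real.exp (-α * ξ t ω) * (1 - α * K₂ / 2)) :=
      mul_le_mul_of_nonneg_left hwb2 hA0
    have hmul2 : K₂⁻¹ * (ξ t ω + K₂) ≤ K₂⁻¹ * (μ[ξ (t+1)|𝓕 t]) ω :=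
      mul_le_mul_of_nonneg_left hd2 (by positivity)
    have hid2 : K₂⁻¹ * (ξ t ω + K₂) = ξ t ω / K₂ + 1 := by field_simp
    have e2 : (μ[v|𝓕 t]) ω =
        -A * (μ[w|𝓕 t]) ω + K₂⁻¹ * (μ[ξ (t+1)|𝓕 t]) ω + (-((t:ℝ)+1)) := hvω
    have hnn : 0 ≤ A * Real.exp (-α * ξ t ω) * (α * K₂ / 2) := by positivity
    have hfinal : (μ[ζ|𝓕 t]) ω ≥ -A * Real.exp (-α * ξ t ω) + ξ t ω / K₂ - (t:ℝ) := by
      rw [e1, e2]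
      nlinarith [hAmul, hmul2, hid2, hnn]
    linarith [hmω, hfinal]
end

section
/- Consider a DMC with finite alphabets 𝒳, 𝒴 and P(y|x) > 0 for all x, y, and let C₂ := max_y (max_x P(y|x))/(min_x P(y|x)). Let M ≥ 2, let ρ̃ ∈ [1/2, 1) satisfy (1−ρ̃)·log₂(M−1) ≤ 1, and for a probability vector σ on Ω = {1,…,M} with σᵢ < 1 for all i define Ũ(σ) := Σᵢ σᵢ·log₂(σᵢ/(1−σᵢ)) − log₂(ρ̃/(1−ρ̃)). Let ρ be a probability vector on Ω with ρᵢ < 1 for all i, let γ: Ω → 𝒳 be an encoding function, let y ∈ 𝒴, and let ρ' := Φ^γ(ρ, y) be the Bayes update. If max{Ũ(ρ), Ũ(ρ')} ≥ 0, then |Ũ(ρ') − Ũ(ρ)| ≤ 4·C₂. -/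
set_option maxHeartbeats 1000000

open Finset

/- ### Auxiliary analytic lemmas -/

private lemma neg_mul_log_le_half {t : ℝ} (ht : 0 < t) : -(t * Real.log t) ≤ 1 / 2 := by
  have hs : 0 < Real.sqrt t := Real.sqrt_pos.mpr ht
  have h3 : Real.sqrt t * Real.sqrt t = t := Real.mul_self_sqrt ht.le
  have h1 : Real.log (1 / Real.sqrt t) ≤ 1 / Real.sqrt t - 1 :=
    Real.log_le_sub_one_of_pos (by positivity)
  have h2 : Real.log (1 / Real.sqrt t) = -(Real.log t) / 2 := by
    rw [one_div, Real.log_inv, Real.log_sqrt ht.le]; ring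
  rw [h2] at h1
  -- -(log t) ≤ 2/√t - 2 ; multiply by t : -(t log t) ≤ 2√t - 2t ≤ 1/2
  have h4 : -(t * Real.log t) ≤ 2 * Real.sqrt t - 2 * t := by
    have := mul_le_mul_of_nonneg_left h1 ht.le
    have ht_div : t * (1 / Real.sqrt t) = Real.sqrt t := by
      rw [mul_one_div, div_eq_iff hs.ne']
      exact h3.symm
    nlinarith [this]
  nlinarith [sq_nonneg (Real.sqrt t - 1 / 2), h3]

private lemma mul_logb_one_div_le {t : ℝ} (ht : 0 < t) :
    t * Real.logb 2 (1 / t) ≤ 1 / (2 * Real.log 2) := by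
  have hl2 : 0 < Real.log 2 := Real.log_pos one_lt_two
  have : t * Real.logb 2 (1 / t) = (-(t * Real.log t)) / Real.log 2 := by
    rw [Real.logb, one_div, Real.log_inv]; ring
  rw [this]
  rw [div_le_div_iff₀ hl2 (by positivity)]
  have := neg_mul_log_le_half ht
  nlinarith [this, hl2]

private lemma div_le_div_same' {a b c : ℝ} (h : a ≤ b) (hc : 0 ≤ c) : a / c ≤ b / c := by
  rw [div_eq_mul_inv, div_eq_mul_inv]
  exact mul_le_mul_of_nonneg_right h (inv_nonneg.mpr hc)

private lemma ent_term {p s m1 : ℝ} (hp : 0 ≤ p) (hs : 0 < s) (hm : 0 < m1) :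
    p * Real.logb 2 (1 / p) ≤ (s / m1 - p) / Real.log 2 + p * Real.logb 2 (m1 / s) := by
  have hl2 : 0 < Real.log 2 := Real.log_pos one_lt_two
  rcases eq_or_lt_of_le hp with h0 | h0
  · rw [← h0]
    simp only [zero_mul, zero_add, sub_zero]
    have : 0 ≤ s / m1 := (div_pos hs hm).le
    positivity
  · have hsm1p : 0 < s / (m1 * p) := div_pos hs (mul_pos hm h0)
    have key : Real.log (s / (m1 * p)) ≤ s / (m1 * p) - 1 :=
      Real.log_le_sub_one_of_pos hsm1p
    have hsplit : Real.log (1 / p) = Real.log (m1 / s) + Real.log (s / (m1 * p)) := by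
      rw [← Real.log_mul (div_pos hm hs).ne' hsm1p.ne']
      congr 1
      field_simp
    have hmul : p * Real.log (s / (m1 * p)) ≤ s / m1 - p := by
      have h := mul_le_mul_of_nonneg_left key h0.le
      have hid : p * (s / (m1 * p)) = s / m1 := by field_simp
      nlinarith [h, hid]
    have hstep : p * Real.log (1 / p) ≤ (s / m1 - p) + p * Real.log (m1 / s) := by
      rw [hsplit, mul_add]
      linarith [hmul]
    have e1 : p * Real.logb 2 (1 / p) = (p * Real.log (1 / p)) / Real.log 2 := by
      rw [Real.logb]; ring
    have e2 : (s / m1 - p) / Real.log 2 + p * Real.logb 2 (m1 / s)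
        = ((s / m1 - p) + p * Real.log (m1 / s)) / Real.log 2 := by
      rw [Real.logb]; ring
    rw [e1, e2, div_le_div_iff₀ hl2 hl2]
    nlinarith [hstep, hl2]

/-- odds-ratio bound under multiplicative perturbation -/
private lemma odds_logb_le {p q C : ℝ} (hp : 0 < p) (hp1 : p < 1) (hq : 0 < q) (hq1 : q < 1)
    (hC : 1 ≤ C) (h1 : q ≤ C * p) (h2 : (1 - p) / C ≤ 1 - q) :
    Real.logb 2 (q / (1 - q)) ≤ Real.logb 2 (p / (1 - p)) + 2 * Real.logb 2 C := by
  have hC0 : 0 < C := lt_of_lt_of_le one_pos hC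
  have hp1' : (0:ℝ) < 1 - p := by linarith
  have hq1' : (0:ℝ) < 1 - q := by linarith
  have hub : q / (1 - q) ≤ C * C * (p / (1 - p)) := by
    have hstep : q / (1 - q) ≤ (C * p) / ((1 - p) / C) :=
      div_le_div₀ (mul_nonneg hC0.le hp.le) h1 (div_pos hp1' hC0) h2
    have heq : (C * p) / ((1 - p) / C) = C * C * (p / (1 - p)) := by
      field_simp
    linarith [heq ▸ hstep]
  have hlog := Real.logb_le_logb_of_le one_lt_two (div_pos hq hq1') hub
  have hsplit : Real.logb 2 (C * C * (p / (1 - p)))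
      = Real.logb 2 C + Real.logb 2 C + Real.logb 2 (p / (1 - p)) := by
    rw [Real.logb_mul (mul_pos hC0 hC0).ne' (div_pos hp hp1').ne',
      Real.logb_mul hC0.ne' hC0.ne']
  rw [hsplit] at hlog
  linarith

/- ### Core lemma -/

private lemma core_jump {M : ℕ} (hM : 2 ≤ M) (ρtil : ℝ) (hρtil1 : 1 / 2 ≤ ρtil) (hρtil2 : ρtil < 1)
    (hρtilM : (1 - ρtil) * Real.logb 2 ((M : ℝ) - 1) ≤ 1)
    (ρ ρ' : Fin M → ℝ)
    (hρ0 : ∀ i, 0 ≤ ρ i) (hρ1 : ∑ i, ρ i = 1) (hρlt : ∀ i, ρ i < 1)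
    (hρ'0 : ∀ i, 0 ≤ ρ' i) (hρ'1 : ∑ i, ρ' i = 1) (hρ'lt : ∀ i, ρ' i < 1)
    (C : ℝ) (hC1 : 1 ≤ C)
    (hr1 : ∀ i, ρ' i ≤ C * ρ i) (hr2 : ∀ i, ρ i ≤ C * ρ' i)
    (hf : Real.logb 2 (ρtil / (1 - ρtil)) ≤ ∑ i, ρ i * Real.logb 2 (ρ i / (1 - ρ i))) :
    |(∑ i, ρ' i * Real.logb 2 (ρ' i / (1 - ρ' i)))
      - ∑ i, ρ i * Real.logb 2 (ρ i / (1 - ρ i))| ≤ 4 * C := by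
  have hC0 : 0 < C := lt_of_lt_of_le one_pos hC1
  have h1ρ : ∀ i, 0 < 1 - ρ i := fun i => by linarith [hρlt i]
  have h1ρ' : ∀ i, 0 < 1 - ρ' i := fun i => by linarith [hρ'lt i]
  have hl2 : 0 < Real.log 2 := Real.log_pos one_lt_two
  set L : Fin M → ℝ := fun i => Real.logb 2 (ρ i / (1 - ρ i)) with hLdef
  set L' : Fin M → ℝ := fun i => Real.logb 2 (ρ' i / (1 - ρ' i)) with hL'def
  have hL : ∀ i, L i = Real.logb 2 (ρ i / (1 - ρ i)) := fun i => rfl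
  have hL' : ∀ i, L' i = Real.logb 2 (ρ' i / (1 - ρ' i)) := fun i => rfl
  clear_value L L'
  simp only [← hL] at hf
  rw [show (∑ i, ρ' i * Real.logb 2 (ρ' i / (1 - ρ' i))) = ∑ i, ρ' i * L' i by
        simp only [hL'],
      show (∑ i, ρ i * Real.logb 2 (ρ i / (1 - ρ i))) = ∑ i, ρ i * L i by
        simp only [hL]]
  -- erase sums
  have hsum_erase : ∀ i, ∑ j ∈ univ.erase i, ρ j = 1 - ρ i := fun i => by
    rw [Finset.sum_erase_eq_sub (mem_univ i), hρ1]
  have hsum_erase' : ∀ i, ∑ j ∈ univ.erase i, ρ' j = 1 - ρ' i := fun i => by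
    rw [Finset.sum_erase_eq_sub (mem_univ i), hρ'1]
  -- key ratio facts about 1 - ρ
  have key : ∀ i, (1 - ρ i) / C ≤ 1 - ρ' i := by
    intro i
    rw [← hsum_erase i, ← hsum_erase' i, Finset.sum_div]
    refine Finset.sum_le_sum fun j _ => ?_
    rw [div_le_iff₀ hC0]
    linarith [hr2 j]
  have key' : ∀ i, (1 - ρ' i) / C ≤ 1 - ρ i := by
    intro i
    rw [← hsum_erase i, ← hsum_erase' i, Finset.sum_div]
    refine Finset.sum_le_sum fun j _ => ?_
    rw [div_le_iff₀ hC0]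
    linarith [hr1 j]
  -- existence of a big component
  obtain ⟨k, hk⟩ : ∃ i, ρtil ≤ ρ i := by
    by_contra hcon
    push_neg at hcon
    obtain ⟨i0, _, hi0⟩ : ∃ i ∈ univ, (0 : ℝ) < ρ i := by
      apply Finset.exists_lt_of_sum_lt (f := fun _ => (0 : ℝ))
      rw [hρ1, Finset.sum_const_zero]; norm_num
    have hodds : ∀ i : Fin M, 0 < ρ i → ρ i / (1 - ρ i) < ρtil / (1 - ρtil) := by
      intro i hi
      rw [div_lt_div_iff₀ (h1ρ i) (by linarith : (0:ℝ) < 1 - ρtil)]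
      nlinarith [hcon i, hi]
    have hlt : ∑ i, ρ i * L i < ∑ i, ρ i * Real.logb 2 (ρtil / (1 - ρtil)) := by
      apply Finset.sum_lt_sum
      · intro i _
        rcases eq_or_lt_of_le (hρ0 i) with h0 | h0
        · rw [← h0]; simp
        · rw [hL i]
          exact mul_le_mul_of_nonneg_left
            (Real.logb_le_logb_of_le one_lt_two (div_pos h0 (h1ρ i)) (hodds i h0).le) h0.le
      · refine ⟨i0, mem_univ _, ?_⟩
        rw [hL i0]
        exact mul_lt_mul_of_pos_left
          (Real.logb_lt_logb one_lt_two (div_pos hi0 (h1ρ i0)) (hodds i0 hi0)) hi0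
    rw [← Finset.sum_mul, hρ1, one_mul] at hlt
    exact absurd hf (not_le.mpr hlt)
  obtain ⟨ε, hεdef⟩ : ∃ ε : ℝ, ε = 1 - ρ k := ⟨_, rfl⟩
  have hε0 : 0 < ε := hεdef ▸ h1ρ k
  have hεle : ε ≤ 1 - ρtil := by rw [hεdef]; linarith
  have hεhalf : ε ≤ 1 / 2 := by linarith
  have hk2 : 1 / 2 ≤ ρ k := le_trans hρtil1 hk
  -- decomposition
  have hdecomp : (∑ i, ρ' i * L' i) - ∑ i, ρ i * L i
      = (∑ i, ρ' i * (L' i - L i)) + ∑ i, (ρ' i - ρ i) * L i := by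
    rw [← Finset.sum_add_distrib, ← Finset.sum_sub_distrib]
    exact Finset.sum_congr rfl fun i _ => by ring
  -- bound on S1
  have hlogC0 : 0 ≤ Real.logb 2 C := Real.logb_nonneg one_lt_two hC1
  have hS1 : |∑ i, ρ' i * (L' i - L i)| ≤ 2 * Real.logb 2 C := by
    calc |∑ i, ρ' i * (L' i - L i)| ≤ ∑ i, |ρ' i * (L' i - L i)| :=
          Finset.abs_sum_le_sum_abs _ _
      _ ≤ ∑ i, ρ' i * (2 * Real.logb 2 C) := by
          refine Finset.sum_le_sum fun i _ => ?_
          rcases eq_or_lt_of_le (hρ'0 i) with h0 | h0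
          · rw [← h0]; simp
          · have hρi : 0 < ρ i := by
              rcases (hρ0 i).lt_or_eq with h | h
              · exact h
              · exfalso
                have h1 := hr1 i
                rw [← h, mul_zero] at h1
                linarith
            rw [abs_mul, abs_of_pos h0]
            refine mul_le_mul_of_nonneg_left ?_ h0.le
            rw [abs_le]
            constructor
            · have := odds_logb_le h0 (hρ'lt i) hρi (hρlt i)
                hC1 (hr2 i) (key' i)
              simp only [hL, hL']
              linarith [this]
            · have := odds_logb_le hρi (hρlt i) h0 (hρ'lt i) hC1 (hr1 i) (key i)
              simp only [hL, hL']
              linarith [this]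
      _ = 2 * Real.logb 2 C := by rw [← Finset.sum_mul, hρ'1, one_mul]
  -- pointwise deviation bounds
  have hδ1 : ∀ i, |ρ' i - ρ i| ≤ (C - 1) * (1 - ρ i) := by
    intro i
    have hk1 := (div_le_iff₀ hC0).mp (key i)
    have hk2' := (div_le_iff₀ hC0).mp (key' i)
    rw [abs_le]
    constructor
    · nlinarith [h1ρ i, sq_nonneg (C - 1)]
    · nlinarith [h1ρ' i, sq_nonneg (C - 1), h1ρ i]
  have hδ2 : ∀ i, |ρ' i - ρ i| ≤ (C - 1) * ρ i := by
    intro i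
    rw [abs_le]
    constructor
    · nlinarith [hr2 i, hρ'0 i, sq_nonneg (C - 1), hρ0 i]
    · nlinarith [hr1 i, hρ0 i]
  -- bound on the k-th term of S2
  have hLk : |L k| ≤ Real.logb 2 (1 / ε) := by
    have hρk0 : 0 < ρ k := by linarith
    have hpos : (0 : ℝ) < ρ k / (1 - ρ k) := div_pos hρk0 (h1ρ k)
    have h1 : (1 : ℝ) ≤ ρ k / (1 - ρ k) := by
      rw [le_div_iff₀ (h1ρ k)]; linarith
    have h2 : ρ k / (1 - ρ k) ≤ 1 / ε := by
      rw [hεdef]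
      exact div_le_div_same' (by linarith [hρlt k]) (h1ρ k).le
    rw [hL k, abs_of_nonneg (Real.logb_nonneg one_lt_two h1)]
    exact Real.logb_le_logb_of_le one_lt_two hpos h2
  have htermk : |(ρ' k - ρ k) * L k| ≤ (C - 1) * (1 / (2 * Real.log 2)) := by
    rw [abs_mul]
    calc |ρ' k - ρ k| * |L k| ≤ ((C - 1) * ε) * Real.logb 2 (1 / ε) := by
          have h1 : |ρ' k - ρ k| ≤ (C - 1) * ε := by
            rw [hεdef]
            exact hδ1 k
          exact mul_le_mul h1 hLk (abs_nonneg _)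
            (mul_nonneg (by linarith) hε0.le)
      _ = (C - 1) * (ε * Real.logb 2 (1 / ε)) := by ring
      _ ≤ (C - 1) * (1 / (2 * Real.log 2)) :=
          mul_le_mul_of_nonneg_left (mul_logb_one_div_le hε0) (by linarith)
  -- bound on tail terms of S2
  have hM1 : (1 : ℝ) ≤ (M : ℝ) - 1 := by
    have : (2 : ℝ) ≤ (M : ℝ) := by exact_mod_cast hM
    linarith
  have hm1pos : (0 : ℝ) < (M : ℝ) - 1 := by linarith
  have htail : ∑ j ∈ univ.erase k, |(ρ' j - ρ j) * L j|
      ≤ (C - 1) * (1 + 1 / (2 * Real.log 2)) := by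
    have step1 : ∀ j ∈ univ.erase k,
        |(ρ' j - ρ j) * L j| ≤ (C - 1) * (ρ j * Real.logb 2 (1 / ρ j)) := by
      intro j hj
      have hρjle : ρ j ≤ ε := by
        rw [hεdef, ← hsum_erase k]
        exact Finset.single_le_sum (fun i _ => hρ0 i) hj
      rcases eq_or_lt_of_le (hρ0 j) with h0 | h0
      · have hρ'j : ρ' j = 0 := by
          have h1 := hr1 j
          rw [← h0, mul_zero] at h1
          exact le_antisymm h1 (hρ'0 j)
        rw [hρ'j, ← h0]
        simp
      · have hLj : |L j| ≤ Real.logb 2 (1 / ρ j) := by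
          have hle1 : ρ j / (1 - ρ j) ≤ 1 := by
            rw [div_le_one (h1ρ j)]; linarith
          have hnp : L j ≤ 0 := by
            simp only [hL]
            exact Real.logb_nonpos one_lt_two (div_nonneg h0.le (h1ρ j).le) hle1
          rw [abs_of_nonpos hnp]
          have : -L j = Real.logb 2 ((1 - ρ j) / ρ j) := by
            simp only [hL]
            rw [← Real.logb_inv, inv_div]
          rw [this]
          apply Real.logb_le_logb_of_le one_lt_two (div_pos (h1ρ j) h0)
          exact div_le_div_same' (by linarith [h1ρ j]) h0.le
        rw [abs_mul]
        calc |ρ' j - ρ j| * |L j| ≤ ((C - 1) * ρ j) * Real.logb 2 (1 / ρ j) := by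
              apply mul_le_mul (hδ2 j) hLj (abs_nonneg _)
              exact mul_nonneg (by linarith) h0.le
          _ = (C - 1) * (ρ j * Real.logb 2 (1 / ρ j)) := by ring
    have step2 : ∑ j ∈ univ.erase k, ρ j * Real.logb 2 (1 / ρ j)
        ≤ ε * Real.logb 2 (((M : ℝ) - 1) / ε) := by
      have hcard : ((univ.erase k).card : ℝ) = (M : ℝ) - 1 := by
        rw [Finset.card_erase_of_mem (mem_univ k)]
        simp only [Finset.card_univ, Fintype.card_fin]
        have : (1:ℕ) ≤ M := by omega
        push_cast [Nat.cast_sub this]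
        ring
      calc ∑ j ∈ univ.erase k, ρ j * Real.logb 2 (1 / ρ j)
          ≤ ∑ j ∈ univ.erase k, ((ε / ((M : ℝ) - 1) - ρ j) / Real.log 2
              + ρ j * Real.logb 2 (((M : ℝ) - 1) / ε)) :=
            Finset.sum_le_sum fun j _ => ent_term (hρ0 j) hε0 hm1pos
        _ = ε * Real.logb 2 (((M : ℝ) - 1) / ε) := by
            rw [Finset.sum_add_distrib, ← Finset.sum_mul, hsum_erase k, ← hεdef]
            have h1 : ∑ j ∈ univ.erase k, (ε / ((M : ℝ) - 1) - ρ j) / Real.log 2 = 0 := by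
              rw [← Finset.sum_div, Finset.sum_sub_distrib, Finset.sum_const, hsum_erase k,
                ← hεdef, nsmul_eq_mul, hcard]
              have h2 : ((M : ℝ) - 1) * (ε / ((M : ℝ) - 1)) - ε = 0 := by
                field_simp
                ring
              rw [h2, zero_div]
            rw [h1, zero_add]
    have step3 : ε * Real.logb 2 (((M : ℝ) - 1) / ε) ≤ 1 + 1 / (2 * Real.log 2) := by
      have hεle' := hεle
      have hε0' := hε0
      have hsplit : Real.logb 2 (((M : ℝ) - 1) / ε)
          = Real.logb 2 ((M : ℝ) - 1) + Real.logb 2 (1 / ε) := by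
        rw [Real.logb_div (by linarith) hε0.ne', one_div, Real.logb_inv]
        ring
      rw [hsplit, mul_add]
      have h1 : ε * Real.logb 2 ((M : ℝ) - 1) ≤ 1 := by
        have hlogM : 0 ≤ Real.logb 2 ((M : ℝ) - 1) := Real.logb_nonneg one_lt_two hM1
        calc ε * Real.logb 2 ((M : ℝ) - 1) ≤ (1 - ρtil) * Real.logb 2 ((M : ℝ) - 1) :=
              mul_le_mul_of_nonneg_right hεle hlogM
          _ ≤ 1 := hρtilM
      have h2 : ε * Real.logb 2 (1 / ε) ≤ 1 / (2 * Real.log 2) := mul_logb_one_div_le hε0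
      linarith [h1, h2]
    calc ∑ j ∈ univ.erase k, |(ρ' j - ρ j) * L j|
        ≤ ∑ j ∈ univ.erase k, (C - 1) * (ρ j * Real.logb 2 (1 / ρ j)) :=
          Finset.sum_le_sum step1
      _ = (C - 1) * ∑ j ∈ univ.erase k, ρ j * Real.logb 2 (1 / ρ j) := by
          rw [Finset.mul_sum]
      _ ≤ (C - 1) * (1 + 1 / (2 * Real.log 2)) :=
          mul_le_mul_of_nonneg_left (step2.trans step3) (by linarith)
  -- total S2 bound
  have hS2 : |∑ i, (ρ' i - ρ i) * L i| ≤ (C - 1) * (1 + 1 / Real.log 2) := by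
    calc |∑ i, (ρ' i - ρ i) * L i| ≤ ∑ i, |(ρ' i - ρ i) * L i| :=
          Finset.abs_sum_le_sum_abs _ _
      _ = (∑ j ∈ univ.erase k, |(ρ' j - ρ j) * L j|) + |(ρ' k - ρ k) * L k| :=
          (Finset.sum_erase_add univ _ (mem_univ k)).symm
      _ ≤ (C - 1) * (1 + 1 / (2 * Real.log 2)) + (C - 1) * (1 / (2 * Real.log 2)) :=
          add_le_add htail htermk
      _ = (C - 1) * (1 + 1 / Real.log 2) := by field_simp; ring
  -- put everything together
  have htot : |(∑ i, ρ' i * L' i) - ∑ i, ρ i * L i|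
      ≤ 2 * Real.logb 2 C + (C - 1) * (1 + 1 / Real.log 2) := by
    rw [hdecomp]
    exact le_trans (abs_add_le _ _) (add_le_add hS1 hS2)
  refine le_trans htot ?_
  -- numeric endgame
  have hln2 : 0.6931471803 < Real.log 2 := Real.log_two_gt_d9
  have hexpand : 2 * Real.logb 2 C + (C - 1) * (1 + 1 / Real.log 2)
      = (2 * Real.log C + (C - 1) * (Real.log 2 + 1)) / Real.log 2 := by
    rw [Real.logb]
    field_simp
    try ring
  rw [hexpand, div_le_iff₀ hl2]
  rcases le_total C 4 with hC4 | hC4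
  · have h1 : Real.log C ≤ C - 1 := Real.log_le_sub_one_of_pos hC0
    nlinarith [mul_nonneg (sub_nonneg.mpr hC4) (by linarith : (0:ℝ) ≤ Real.log 2 - 0.6931471803),
      hC1, hln2]
  · have h2 : Real.log (C / 4) ≤ C / 4 - 1 := Real.log_le_sub_one_of_pos (by linarith)
    have h3 : Real.log C = Real.log (C / 4) + 2 * Real.log 2 := by
      rw [Real.log_div (by linarith) (by norm_num)]
      have : Real.log 4 = 2 * Real.log 2 := by
        rw [show (4 : ℝ) = 2 ^ 2 by norm_num, Real.log_pow]
        push_cast; ring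
      rw [this]; ring
    nlinarith [hln2, hC4]

/-- Bayes update of the posterior `ρ` under encoding function `γ` after observing `y`. -/
noncomputable def bayesUpdate {X Y : Type*} [Fintype Y] {M : ℕ}
    (Pch : X → Y → ℝ) (ρ : Fin M → ℝ) (γ : Fin M → X) (y : Y) : Fin M → ℝ :=
  fun i => ρ i * Pch (γ i) y / ∑ j, ρ j * Pch (γ j) y

/-- Lemma 7: if `max{Ũ(ρ), Ũ(ρ')} ≥ 0` where `ρ'` is the Bayes update of `ρ`, then
`|Ũ(ρ') − Ũ(ρ)| ≤ 4C₂`, where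
`Ũ(σ) = Σᵢ σᵢ·log₂(σᵢ/(1−σᵢ)) − log₂(ρ̃/(1−ρ̃))` and
`C₂ = max_y (max_x P(y|x))/(min_x P(y|x))`. -/
theorem utilde_jump_bound
    (K L M : ℕ) (hM : 2 ≤ M)
    (Pch : Fin (K + 1) → Fin (L + 1) → ℝ)
    (hpos : ∀ x y, 0 < Pch x y) (hpmf : ∀ x, ∑ y, Pch x y = 1)
    (C₂ : ℝ)
    (hC₂ : C₂ = univ.sup' univ_nonempty (fun y : Fin (L + 1) =>
      (univ.sup' univ_nonempty fun x => Pch x y) /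
        (univ.inf' univ_nonempty fun x => Pch x y)))
    (ρtil : ℝ) (hρtil1 : 1 / 2 ≤ ρtil) (hρtil2 : ρtil < 1)
    (hρtilM : (1 - ρtil) * Real.logb 2 (M - 1) ≤ 1)
    (ρ : Fin M → ℝ) (hρ0 : ∀ i, 0 ≤ ρ i) (hρ1 : ∑ i, ρ i = 1)
    (hρlt : ∀ i, ρ i < 1)
    (γ : Fin M → Fin (K + 1)) (y : Fin (L + 1))
    (Ut : (Fin M → ℝ) → ℝ)
    (hUt : ∀ σ, Ut σ =
      (∑ i, σ i * Real.logb 2 (σ i / (1 - σ i))) - Real.logb 2 (ρtil / (1 - ρtil)))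
    (hpos' : 0 ≤ max (Ut ρ) (Ut (bayesUpdate Pch ρ γ y))) :
    |Ut (bayesUpdate Pch ρ γ y) - Ut ρ| ≤ 4 * C₂ := by
  set ρ' := bayesUpdate Pch ρ γ y with hρ'def
  set Z : ℝ := ∑ j, ρ j * Pch (γ j) y with hZdef
  set m : ℝ := univ.inf' univ_nonempty (fun x => Pch x y) with hmdef
  set Mx : ℝ := univ.sup' univ_nonempty (fun x => Pch x y) with hMxdef
  have hm0 : 0 < m := (Finset.lt_inf'_iff _).mpr fun x _ => hpos x y
  have hmP : ∀ x, m ≤ Pch x y := fun x =>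
    hmdef ▸ Finset.inf'_le (fun x => Pch x y) (mem_univ x)
  have hPM : ∀ x, Pch x y ≤ Mx := fun x =>
    hMxdef ▸ Finset.le_sup' (fun x => Pch x y) (mem_univ x)
  have hmM : m ≤ Mx := le_trans (hmP 0) (hPM 0)
  have hZm : m ≤ Z := by
    calc m = ∑ j, ρ j * m := by rw [← Finset.sum_mul, hρ1, one_mul]
      _ ≤ Z := Finset.sum_le_sum fun j _ => mul_le_mul_of_nonneg_left (hmP (γ j)) (hρ0 j)
  have hZM : Z ≤ Mx := by
    calc Z ≤ ∑ j, ρ j * Mx := Finset.sum_le_sum fun j _ =>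
          mul_le_mul_of_nonneg_left (hPM (γ j)) (hρ0 j)
      _ = Mx := by rw [← Finset.sum_mul, hρ1, one_mul]
  have hZ0 : 0 < Z := lt_of_lt_of_le hm0 hZm
  set C : ℝ := Mx / m with hCdef
  have hC1 : 1 ≤ C := (one_le_div hm0).mpr hmM
  have hC0 : 0 < C := lt_of_lt_of_le one_pos hC1
  have hCC₂ : C ≤ C₂ := by
    rw [hC₂]
    exact Finset.le_sup' (fun y : Fin (L+1) => (univ.sup' univ_nonempty fun x => Pch x y) /
        (univ.inf' univ_nonempty fun x => Pch x y)) (mem_univ y)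
  have hρ'eq : ∀ i, ρ' i = ρ i * Pch (γ i) y / Z := fun i => rfl
  have hρ'0 : ∀ i, 0 ≤ ρ' i := fun i => by
    rw [hρ'eq]
    exact div_nonneg (mul_nonneg (hρ0 i) (hpos (γ i) y).le) hZ0.le
  have hρ'1 : ∑ i, ρ' i = 1 := by
    simp only [hρ'eq]
    rw [← Finset.sum_div, ← hZdef, div_self hZ0.ne']
  have hmq : m * C = Mx := by
    rw [hCdef]
    field_simp
  have hr1 : ∀ i, ρ' i ≤ C * ρ i := by
    intro i
    rw [hρ'eq, div_le_iff₀ hZ0]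
    have hPZq : Pch (γ i) y ≤ Z * C := by
      calc Pch (γ i) y ≤ Mx := hPM (γ i)
        _ = m * C := hmq.symm
        _ ≤ Z * C := mul_le_mul_of_nonneg_right hZm hC0.le
    calc ρ i * Pch (γ i) y ≤ ρ i * (Z * C) := mul_le_mul_of_nonneg_left hPZq (hρ0 i)
      _ = C * ρ i * Z := by ring
  have hr2 : ∀ i, ρ i ≤ C * ρ' i := by
    intro i
    rw [hρ'eq, ← mul_div_assoc, le_div_iff₀ hZ0]
    have hZPq : Z ≤ Pch (γ i) y * C := by
      calc Z ≤ Mx := hZM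
        _ = m * C := hmq.symm
        _ ≤ Pch (γ i) y * C := mul_le_mul_of_nonneg_right (hmP (γ i)) hC0.le
    calc ρ i * Z ≤ ρ i * (Pch (γ i) y * C) := mul_le_mul_of_nonneg_left hZPq (hρ0 i)
      _ = C * (ρ i * Pch (γ i) y) := by ring
  have hρ'lt : ∀ i, ρ' i < 1 := by
    intro i
    have hsum_erase : ∑ j ∈ univ.erase i, ρ j = 1 - ρ i := by
      rw [Finset.sum_erase_eq_sub (mem_univ i), hρ1]
    have hpos_tail : 0 < ∑ j ∈ univ.erase i, ρ j * Pch (γ j) y := by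
      obtain ⟨j1, hj1mem, hj1⟩ : ∃ j ∈ univ.erase i, (0:ℝ) < ρ j := by
        apply Finset.exists_lt_of_sum_lt (f := fun _ => (0:ℝ))
        rw [Finset.sum_const_zero, hsum_erase]
        linarith [hρlt i]
      calc (0:ℝ) < ρ j1 * Pch (γ j1) y := mul_pos hj1 (hpos (γ j1) y)
        _ ≤ ∑ j ∈ univ.erase i, ρ j * Pch (γ j) y :=
          Finset.single_le_sum (fun j _ => mul_nonneg (hρ0 j) (hpos (γ j) y).le) hj1mem
    have hZsplit : Z = (∑ j ∈ univ.erase i, ρ j * Pch (γ j) y) + ρ i * Pch (γ i) y := by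
      rw [hZdef]
      exact (Finset.sum_erase_add univ _ (mem_univ i)).symm
    rw [hρ'eq, div_lt_one hZ0]
    linarith [hZsplit]
  have hdiff : Ut ρ' - Ut ρ = (∑ i, ρ' i * Real.logb 2 (ρ' i / (1 - ρ' i)))
      - ∑ i, ρ i * Real.logb 2 (ρ i / (1 - ρ i)) := by
    rw [hUt, hUt]; ring
  rw [hdiff]
  rcases le_max_iff.mp hpos' with hcase | hcase
  · have hf : Real.logb 2 (ρtil / (1 - ρtil)) ≤ ∑ i, ρ i * Real.logb 2 (ρ i / (1 - ρ i)) := by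
      rw [hUt] at hcase; linarith
    have := core_jump hM ρtil hρtil1 hρtil2 hρtilM ρ ρ' hρ0 hρ1 hρlt hρ'0 hρ'1 hρ'lt
      C hC1 hr1 hr2 hf
    linarith [this, hCC₂]
  · have hf : Real.logb 2 (ρtil / (1 - ρtil)) ≤ ∑ i, ρ' i * Real.logb 2 (ρ' i / (1 - ρ' i)) := by
      rw [hUt] at hcase; linarith
    have := core_jump hM ρtil hρtil1 hρtil2 hρtilM ρ' ρ hρ'0 hρ'1 hρ'lt hρ0 hρ1 hρlt
      C hC1 hr2 hr1 hf
    rw [abs_sub_comm]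
    linarith [this, hCC₂]
end

section
/- Consider a DMC with finite alphabets 𝒳, 𝒴 and P(y|x) > 0 for all x, y, and let C₂ := max_y (max_x P(y|x))/(min_x P(y|x)). Let ρ be a probability vector on Ω = {1,…,M}, let γ: Ω → 𝒳 be an encoding function, let y ∈ 𝒴, and let ρ' := Φ^γ(ρ, y) be the Bayes update. Then for every i ∈ Ω with 0 < ρᵢ < 1: |log₂(ρ'ᵢ/(1−ρ'ᵢ)) − log₂(ρᵢ/(1−ρᵢ))| ≤ log₂ C₂. -/
open Finset

/-- Lemma 8: the log-likelihood ratio of each posterior component changes by at most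
`log₂ C₂` under a Bayes update, where `C₂ = max_y (max_x P(y|x))/(min_x P(y|x))`. -/
theorem log_likelihood_jump_bound
    (K L M : ℕ) (hM : 2 ≤ M)
    (Pch : Fin (K + 1) → Fin (L + 1) → ℝ)
    (hpos : ∀ x y, 0 < Pch x y) (hpmf : ∀ x, ∑ y, Pch x y = 1)
    (C₂ : ℝ)
    (hC₂ : C₂ = univ.sup' univ_nonempty (fun y : Fin (L + 1) =>
      (univ.sup' univ_nonempty fun x => Pch x y) /
        (univ.inf' univ_nonempty fun x => Pch x y)))
    (ρ : Fin M → ℝ) (hρ0 : ∀ i, 0 ≤ ρ i) (hρ1 : ∑ i, ρ i = 1)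
    (γ : Fin M → Fin (K + 1)) (y : Fin (L + 1)) :
    ∀ i : Fin M, 0 < ρ i → ρ i < 1 →
      |Real.logb 2 (bayesUpdate Pch ρ γ y i / (1 - bayesUpdate Pch ρ γ y i))
          - Real.logb 2 (ρ i / (1 - ρ i))|
        ≤ Real.logb 2 C₂ := by
  intro i hi0 hi1
  set Mx : ℝ := univ.sup' univ_nonempty (fun x => Pch x y) with hMx
  set m : ℝ := univ.inf' univ_nonempty (fun x => Pch x y) with hm
  have hm_pos : 0 < m := by
    obtain ⟨x, -, hx⟩ := exists_mem_eq_inf' univ_nonempty (fun x => Pch x y)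
    rw [hm, hx]; exact hpos x y
  have hbd : ∀ x, m ≤ Pch x y ∧ Pch x y ≤ Mx := fun x => by
    rw [hm, hMx]
    exact ⟨inf'_le _ (mem_univ x), le_sup' (fun x => Pch x y) (mem_univ x)⟩
  have hmMx : m ≤ Mx := (hbd (γ i)).1.trans (hbd (γ i)).2
  have hMx_pos : 0 < Mx := lt_of_lt_of_le hm_pos hmMx
  -- b = sum over j ≠ i
  set b : ℝ := ∑ j ∈ univ.erase i, ρ j * Pch (γ j) y with hb
  have hsum1 : ∑ j ∈ univ.erase i, ρ j = 1 - ρ i := by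
    have := sum_erase_add univ ρ (mem_univ i)
    linarith [hρ1 ▸ this]
  have h1ρ : 0 < 1 - ρ i := by linarith
  have hblo : m * (1 - ρ i) ≤ b := by
    rw [← hsum1, mul_sum]
    exact sum_le_sum fun j _ => by
      rw [mul_comm (m) (ρ j)]
      exact mul_le_mul_of_nonneg_left (hbd (γ j)).1 (hρ0 j)
  have hbhi : b ≤ Mx * (1 - ρ i) := by
    rw [← hsum1, mul_sum]
    exact sum_le_sum fun j _ => by
      rw [mul_comm (Mx) (ρ j)]
      exact mul_le_mul_of_nonneg_left (hbd (γ j)).2 (hρ0 j)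
  have hb_pos : 0 < b := lt_of_lt_of_le (by positivity) hblo
  have hPi : 0 < Pch (γ i) y := hpos _ y
  have ha_pos : 0 < ρ i * Pch (γ i) y := by positivity
  have hS : (∑ j, ρ j * Pch (γ j) y) = ρ i * Pch (γ i) y + b := by
    rw [hb, ← add_sum_erase univ _ (mem_univ i)]
  have hS_pos : 0 < ∑ j, ρ j * Pch (γ j) y := by rw [hS]; linarith
  -- compute posterior odds
  have hodds : bayesUpdate Pch ρ γ y i / (1 - bayesUpdate Pch ρ γ y i)
      = (ρ i * Pch (γ i) y) / b := by
    unfold bayesUpdate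
    rw [hS]
    field_simp
    simp [hb_pos.ne']
  set t : ℝ := Pch (γ i) y * (1 - ρ i) / b with ht
  have ht_pos : 0 < t := by positivity
  have hkey : (ρ i * Pch (γ i) y / b) / (ρ i / (1 - ρ i)) = t := by
    rw [ht]; field_simp
  have hdiff : Real.logb 2 (bayesUpdate Pch ρ γ y i / (1 - bayesUpdate Pch ρ γ y i))
      - Real.logb 2 (ρ i / (1 - ρ i)) = Real.logb 2 t := by
    rw [hodds, ← Real.logb_div (by positivity) (by positivity), hkey]
  have htlo : (Mx / m)⁻¹ ≤ t := by
    rw [inv_div]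
    rw [div_le_div_iff₀ hMx_pos hb_pos]
    calc m * b ≤ m * (Mx * (1 - ρ i)) :=
          mul_le_mul_of_nonneg_left hbhi hm_pos.le
      _ ≤ Pch (γ i) y * (1 - ρ i) * Mx := by
          have := (hbd (γ i)).1
          nlinarith
  have hthi : t ≤ Mx / m := by
    rw [div_le_div_iff₀ hb_pos hm_pos]
    calc Pch (γ i) y * (1 - ρ i) * m ≤ Mx * (m * (1 - ρ i)) := by
          have h2 := (hbd (γ i)).2
          nlinarith [mul_le_mul_of_nonneg_right h2 (mul_pos hm_pos h1ρ).le]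
      _ ≤ Mx * b := mul_le_mul_of_nonneg_left hblo hMx_pos.le
  have hMm1 : 1 ≤ Mx / m := (one_le_div hm_pos).2 hmMx
  have habs : |Real.logb 2 t| ≤ Real.logb 2 (Mx / m) := by
    rw [abs_le]
    constructor
    · rw [← Real.logb_inv]
      exact Real.logb_le_logb_of_le one_lt_two (by positivity) htlo
    · exact Real.logb_le_logb_of_le one_lt_two ht_pos hthi
  have hCge : Mx / m ≤ C₂ := by
    rw [hC₂]
    exact le_sup' (fun y => (univ.sup' univ_nonempty fun x => Pch x y) /
      (univ.inf' univ_nonempty fun x => Pch x y)) (mem_univ y)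
  rw [hdiff]
  exact habs.trans (Real.logb_le_logb_of_le one_lt_two (by positivity) hCge)
end

section
/- Consider a DMC with finite alphabets 𝒳, 𝒴 and P(y|x) > 0 for all x, y, and let C₂ := max_y (max_x P(y|x))/(min_x P(y|x)). Let ρ be a probability vector on Ω = {1,…,M}, let γ: Ω → 𝒳 be an encoding function, let y ∈ 𝒴, and let ρ' := Φ^γ(ρ, y) be the Bayes update. Then for every i ∈ Ω: |ρ'ᵢ − ρᵢ| ≤ C₂ · min{ρᵢ(1−ρᵢ), ρ'ᵢ(1−ρ'ᵢ)}. -/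
open Finset

/-- Lemma 9: each posterior component changes by at most
`C₂·min{ρᵢ(1−ρᵢ), ρ'ᵢ(1−ρ'ᵢ)}` under a Bayes update, where
`C₂ = max_y (max_x P(y|x))/(min_x P(y|x))`. -/
theorem posterior_jump_bound
    (K L M : ℕ) (hM : 2 ≤ M)
    (Pch : Fin (K + 1) → Fin (L + 1) → ℝ)
    (hpos : ∀ x y, 0 < Pch x y) (hpmf : ∀ x, ∑ y, Pch x y = 1)
    (C₂ : ℝ)
    (hC₂ : C₂ = univ.sup' univ_nonempty (fun y : Fin (L + 1) =>
      (univ.sup' univ_nonempty fun x => Pch x y) /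
        (univ.inf' univ_nonempty fun x => Pch x y)))
    (ρ : Fin M → ℝ) (hρ0 : ∀ i, 0 ≤ ρ i) (hρ1 : ∑ i, ρ i = 1)
    (γ : Fin M → Fin (K + 1)) (y : Fin (L + 1)) :
    ∀ i : Fin M,
      |bayesUpdate Pch ρ γ y i - ρ i|
        ≤ C₂ * min (ρ i * (1 - ρ i))
            (bayesUpdate Pch ρ γ y i * (1 - bayesUpdate Pch ρ γ y i)) := by
  intro i
  classical
  set a : ℝ := univ.inf' univ_nonempty (fun x : Fin (K+1) => Pch x y) with ha
  set b : ℝ := univ.sup' univ_nonempty (fun x : Fin (K+1) => Pch x y) with hb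
  have ha0 : 0 < a := by
    obtain ⟨x, -, hx⟩ := exists_mem_eq_inf' univ_nonempty (fun x : Fin (K+1) => Pch x y)
    rw [ha, hx]; exact hpos x y
  have haP : ∀ x, a ≤ Pch x y := fun x => inf'_le _ (mem_univ x)
  have hPb : ∀ x, Pch x y ≤ b := by
    intro x; rw [hb]; exact le_sup' (fun x => Pch x y) (mem_univ x)
  have hb0 : 0 < b := ha0.trans_le ((haP 0).trans (hPb 0))
  have hbC : b ≤ C₂ * a := by
    have h : b / a ≤ C₂ := by
      rw [hC₂, hb, ha]
      exact le_sup' (fun y => (univ.sup' univ_nonempty fun x => Pch x y) /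
        (univ.inf' univ_nonempty fun x => Pch x y)) (mem_univ y)
    have := (div_le_iff₀ ha0).mp h
    linarith
  have hC0 : 0 < C₂ := by nlinarith
  set S : ℝ := ∑ j, ρ j * Pch (γ j) y with hS
  have hSa : a ≤ S := by
    calc a = ∑ j, ρ j * a := by rw [← sum_mul, hρ1, one_mul]
    _ ≤ S := sum_le_sum fun j _ => mul_le_mul_of_nonneg_left (haP _) (hρ0 j)
  have hSb : S ≤ b := by
    calc S ≤ ∑ j, ρ j * b := sum_le_sum fun j _ => mul_le_mul_of_nonneg_left (hPb _) (hρ0 j)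
    _ = b := by rw [← sum_mul, hρ1, one_mul]
  have hS0 : 0 < S := lt_of_lt_of_le ha0 hSa
  set ρ' : Fin M → ℝ := bayesUpdate Pch ρ γ y with hρ'def
  have hρ' : ∀ j, ρ' j = ρ j * Pch (γ j) y / S := fun j => rfl
  have hsum' : ∑ j, ρ' j = 1 := by
    simp only [hρ']
    rw [← sum_div, ← hS, div_self hS0.ne']
  have ht : ∀ j, ρ' i * ρ j - ρ i * ρ' j = ρ i * ρ j * (Pch (γ i) y - Pch (γ j) y) / S := by
    intro j
    rw [hρ' i, hρ' j]
    field_simp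
  -- general core inequality
  have hgen : ∀ u v : ℝ, a ≤ u → u ≤ b → a ≤ v → v ≤ b → (u - v) * S ≤ C₂ * (u * v) := by
    intro u v h1 h2 h3 h4
    have hu0 : 0 < u := ha0.trans_le h1
    nlinarith [mul_nonneg (sub_nonneg.2 hSb) (sub_nonneg.2 h3),
      mul_nonneg (sub_nonneg.2 h3) hb0.le,
      mul_nonneg (sub_nonneg.2 hbC) hu0.le,
      mul_nonneg (mul_nonneg hC0.le (sub_nonneg.2 h3)) hu0.le,
      mul_pos ha0 hb0, mul_nonneg (sub_nonneg.2 h2) hS0.le,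
      mul_nonneg (sub_nonneg.2 hSb) (sub_nonneg.2 (h3.trans h4))]
  have hcore : ∀ j : Fin M, |Pch (γ i) y - Pch (γ j) y| * S ≤ C₂ * (Pch (γ i) y * Pch (γ j) y) := by
    intro j
    rcases abs_cases (Pch (γ i) y - Pch (γ j) y) with ⟨he, hc⟩ | ⟨he, hc⟩ <;> rw [he]
    · exact hgen _ _ (haP _) (hPb _) (haP _) (hPb _)
    · have := hgen _ _ (haP (γ j)) (hPb _) (haP (γ i)) (hPb _)
      nlinarith
  have key1 : ∀ j : Fin M, |ρ' i * ρ j - ρ i * ρ' j| ≤ C₂ * (ρ i * ρ j) := by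
    intro j
    have hrr : 0 ≤ ρ i * ρ j := mul_nonneg (hρ0 i) (hρ0 j)
    rw [ht j, abs_div, abs_of_pos hS0, abs_mul, abs_of_nonneg hrr, div_le_iff₀ hS0]
    have h1 : |Pch (γ i) y - Pch (γ j) y| ≤ C₂ * S := by
      have h2 := haP (γ i); have h3 := haP (γ j)
      have h4 := hPb (γ i); have h5 := hPb (γ j)
      have h6 : C₂ * a ≤ C₂ * S := mul_le_mul_of_nonneg_left hSa hC0.le
      rw [abs_le]; constructor <;> nlinarith
    nlinarith [mul_le_mul_of_nonneg_left h1 hrr]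
  have key2 : ∀ j : Fin M, |ρ' i * ρ j - ρ i * ρ' j| ≤ C₂ * (ρ' i * ρ' j) := by
    intro j
    have hrr : 0 ≤ ρ i * ρ j := mul_nonneg (hρ0 i) (hρ0 j)
    rw [ht j, hρ' i, hρ' j, abs_div, abs_of_pos hS0, abs_mul, abs_of_nonneg hrr]
    have hne : C₂ * (ρ i * Pch (γ i) y / S * (ρ j * Pch (γ j) y / S)) =
        C₂ * (ρ i * ρ j * (Pch (γ i) y * Pch (γ j) y)) / (S * S) := by ring
    rw [hne, div_le_div_iff₀ hS0 (mul_pos hS0 hS0)]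
    nlinarith [mul_le_mul_of_nonneg_left (hcore j) (mul_nonneg hrr hS0.le)]
  have hid : ρ' i - ρ i = ∑ j, (ρ' i * ρ j - ρ i * ρ' j) := by
    rw [sum_sub_distrib, ← mul_sum, ← mul_sum, hρ1, hsum', mul_one, mul_one]
  have hzero : |ρ' i * ρ i - ρ i * ρ' i| = 0 := by rw [mul_comm]; simp
  have habs : |ρ' i - ρ i| ≤ ∑ j ∈ univ.erase i, |ρ' i * ρ j - ρ i * ρ' j| := by
    rw [hid]
    refine (abs_sum_le_sum_abs _ _).trans_eq ?_
    rw [sum_erase_eq_sub (mem_univ i), hzero, sub_zero]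
  rw [mul_min_of_nonneg _ _ hC0.le]
  apply le_min
  · refine habs.trans ?_
    calc ∑ j ∈ univ.erase i, |ρ' i * ρ j - ρ i * ρ' j|
        ≤ ∑ j ∈ univ.erase i, C₂ * (ρ i * ρ j) := sum_le_sum fun j _ => key1 j
      _ = C₂ * (ρ i * ∑ j ∈ univ.erase i, ρ j) := by rw [← mul_sum, ← mul_sum]
      _ = C₂ * (ρ i * (1 - ρ i)) := by rw [sum_erase_eq_sub (mem_univ i), hρ1]
  · refine habs.trans ?_
    calc ∑ j ∈ univ.erase i, |ρ' i * ρ j - ρ i * ρ' j|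
        ≤ ∑ j ∈ univ.erase i, C₂ * (ρ' i * ρ' j) := sum_le_sum fun j _ => key2 j
      _ = C₂ * (ρ' i * ∑ j ∈ univ.erase i, ρ' j) := by rw [← mul_sum, ← mul_sum]
      _ = C₂ * (ρ' i * (1 - ρ' i)) := by rw [sum_erase_eq_sub (mem_univ i), hsum']
end
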